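/- arXiv:1104.0446 — 12 statements merged into one kernel-verified Lean document; each statement's English description precedes it below -/
import Mathlib

section
/- Let A be a real m×N matrix, let u0 ∈ ℝ^N be a binary vector (u0(x) ∈ {0,1} for every x), and set b = A u0. Then the following are equivalent: (i) there is no nonzero v ∈ ℝ^N with A v = 0 such that v(x) ≤ 0 whenever u0(x) = 1 and v(x) ≥ 0 whenever u0(x) = 0; (ii) u0 is the unique vector u ∈ ℝ^N satisfying A u = b and 0 ≤ u(x) ≤ 1 for all x. -/
/-!
If `u` solves (P1), then `u - u0` lies in `ker A` and, since `u` stays in the box `[0,1]^N`,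
it is `≤ 0` where `u0 = 1` and `≥ 0` where `u0 = 0`. Conversely, a nonzero `v` with this sign
pattern points into the box from its vertex `u0`, so `u0 + ε • v` is a second solution of (P1)
for small `ε > 0`.
-/

open Matrix

variable {ι κ : Type*} [Fintype ι]

lemma exists_pos_forall_abs_mul_le_one (v : ι → ℝ) : ∃ ε > 0, ∀ x, |ε * v x| ≤ 1 := by
  refine ⟨(1 + ‖v‖)⁻¹, by positivity, fun x => ?_⟩
  rw [abs_mul, abs_of_pos (by positivity), inv_mul_le_iff₀ (by positivity)]
  have hvx : |v x| ≤ ‖v‖ := norm_le_pi_norm v x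
  linarith

lemma exists_pos_add_smul_mem_unit_box {u0 v : ι → ℝ} (hbin : ∀ x, u0 x = 0 ∨ u0 x = 1)
    (hneg : ∀ x, u0 x = 1 → v x ≤ 0) (hpos : ∀ x, u0 x = 0 → 0 ≤ v x) :
    ∃ ε : ℝ, 0 < ε ∧ ∀ x, 0 ≤ (u0 + ε • v) x ∧ (u0 + ε • v) x ≤ 1 := by
  obtain ⟨ε, hε, hsmall⟩ := exists_pos_forall_abs_mul_le_one v
  refine ⟨ε, hε, fun x => ?_⟩
  obtain ⟨hlo, hhi⟩ := abs_le.mp (hsmall x)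
  simp only [Pi.add_apply, Pi.smul_apply, smul_eq_mul]
  rcases hbin x with h0 | h1
  · have := mul_nonneg hε.le (hpos x h0)
    rw [h0]
    constructor <;> linarith
  · have := mul_nonpos_of_nonneg_of_nonpos hε.le (hneg x h1)
    rw [h1]
    constructor <;> linarith

theorem Matrix.eq_of_mulVec_eq_of_mem_unit_box {A : Matrix κ ι ℝ} {u0 : ι → ℝ}
    (hker : ¬ ∃ v : ι → ℝ, v ≠ 0 ∧ A *ᵥ v = 0 ∧
        (∀ x, u0 x = 1 → v x ≤ 0) ∧ (∀ x, u0 x = 0 → 0 ≤ v x))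
    {u : ι → ℝ} (hAu : A *ᵥ u = A *ᵥ u0) (hbox : ∀ x, 0 ≤ u x ∧ u x ≤ 1) : u = u0 := by
  by_contra hne
  refine hker ⟨u - u0, sub_ne_zero.mpr hne, by rw [mulVec_sub, hAu, sub_self], ?_, ?_⟩
  · intro x hx
    simpa [hx] using (hbox x).2
  · intro x hx
    simpa [hx] using (hbox x).1

theorem Matrix.not_exists_ker_sign_pattern {A : Matrix κ ι ℝ} {u0 : ι → ℝ}
    (hbin : ∀ x, u0 x = 0 ∨ u0 x = 1)
    (huniq : ∀ u : ι → ℝ, A *ᵥ u = A *ᵥ u0 → (∀ x, 0 ≤ u x ∧ u x ≤ 1) → u = u0) :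
    ¬ ∃ v : ι → ℝ, v ≠ 0 ∧ A *ᵥ v = 0 ∧
        (∀ x, u0 x = 1 → v x ≤ 0) ∧ (∀ x, u0 x = 0 → 0 ≤ v x) := by
  rintro ⟨v, hv0, hAv, hneg, hpos⟩
  obtain ⟨ε, hε, hbox⟩ := exists_pos_add_smul_mem_unit_box hbin hneg hpos
  have hsol : u0 + ε • v = u0 :=
    huniq _ (by rw [mulVec_add, mulVec_smul, hAv, smul_zero, add_zero]) hbox
  exact hv0 ((smul_eq_zero.mp (add_eq_left.mp hsol)).resolve_left hε.ne')

/-- Theorem 1 of the paper: a binary vector `u0` is the unique solution of the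
box-constrained problem (P1) iff the kernel of `A` meets the orthant determined
by `u0` only at the origin. -/
theorem stmt_0 (m N : ℕ) (A : Matrix (Fin m) (Fin N) ℝ) (u0 : Fin N → ℝ)
    (hbin : ∀ x, u0 x = 0 ∨ u0 x = 1) :
    (¬ ∃ v : Fin N → ℝ, v ≠ 0 ∧ A.mulVec v = 0 ∧
        (∀ x, u0 x = 1 → v x ≤ 0) ∧ (∀ x, u0 x = 0 → 0 ≤ v x)) ↔
    (∀ u : Fin N → ℝ, A.mulVec u = A.mulVec u0 →
        (∀ x, 0 ≤ u x ∧ u x ≤ 1) → u = u0) :=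
  ⟨fun hker _ hAu hbox => A.eq_of_mulVec_eq_of_mem_unit_box hker hAu hbox,
    A.not_exists_ker_sign_pattern hbin⟩
end

section
/- Let A be a real m×N matrix, let u0 ∈ ℝ^N be a binary vector (u0(x) ∈ {0,1} for every x), and set b = A u0. Then the following are equivalent: (i) there exists η ∈ ℝ^m such that the vector v = Aᵀη satisfies v(x) < 0 whenever u0(x) = 1 and v(x) > 0 whenever u0(x) = 0; (ii) u0 is the unique vector u ∈ ℝ^N satisfying A u = b and 0 ≤ u(x) ≤ 1 for all x. -/
/-!
Flipping the coordinates in the support of `u0` (the diagonal sign matrix `D` with entries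
`1 - 2 u0(x)`) turns the box `[0,1]^N` near `u0` into the nonnegative orthant near `0`. Hence
`u0` is the unique solution of (P1) iff `ker (A D)` meets the nonnegative orthant only at `0`,
and condition (i) says that some `(A D)ᵀ η` is strictly positive. These two conditions are
equivalent by Stiemke's transposition theorem, whose nontrivial half separates `0` from the
compact convex image of the standard simplex under `A D`.
-/

open Matrix

theorem Matrix.exists_transpose_mulVec_pos_iff {κ ι : Type*} [Fintype κ] [Fintype ι]
    (B : Matrix κ ι ℝ) :
    (∃ η : κ → ℝ, ∀ x, 0 < (Bᵀ *ᵥ η) x) ↔ ∀ w : ι → ℝ, B *ᵥ w = 0 → 0 ≤ w → w = 0 := by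
  classical
  constructor
  · rintro ⟨η, hη⟩ w hBw hw
    have hdot : (Bᵀ *ᵥ η) ⬝ᵥ w = 0 := by
      rw [mulVec_transpose, ← dotProduct_mulVec, hBw, dotProduct_zero]
    have hterms := (Finset.sum_eq_zero_iff_of_nonneg fun x _ ↦
      mul_nonneg (hη x).le (hw x)).mp hdot
    funext x
    exact (mul_eq_zero.mp (hterms x (Finset.mem_univ x))).resolve_left (hη x).ne'
  · intro hker
    set S := B.mulVecLin '' stdSimplex ℝ ι
    have hS_closed : IsClosed S :=
      ((isCompact_stdSimplex ℝ ι).image (LinearMap.continuous_of_finiteDimensional _)).isClosed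
    have hzero : (0 : κ → ℝ) ∉ S := by
      rintro ⟨w, hw, hBw⟩
      have hsum := hw.2
      rw [hker w hBw hw.1] at hsum
      simp at hsum
    obtain ⟨f, c, hfS, hc⟩ :=
      geometric_hahn_banach_closed_point ((convex_stdSimplex ℝ ι).linear_image _) hS_closed hzero
    set η := (dotProductEquiv ℝ κ).symm f.toLinearMap
    have hf : ∀ y, f y = η ⬝ᵥ y := fun y ↦
      (LinearMap.congr_fun ((dotProductEquiv ℝ κ).apply_symm_apply f.toLinearMap) y).symm
    refine ⟨-η, fun x ↦ ?_⟩
    have hneg : f (B *ᵥ Pi.single x 1) < 0 := by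
      rw [map_zero] at hc
      exact (hfS _ ⟨_, single_mem_stdSimplex ℝ x, rfl⟩).trans hc
    rw [hf, dotProduct_mulVec, ← mulVec_transpose, dotProduct_single, mul_one] at hneg
    rwa [mulVec_neg, Pi.neg_apply, neg_pos]

lemma add_mul_sign_mul_mem_unitInterval {a w t : ℝ} (ha : a = 0 ∨ a = 1) (hw : 0 ≤ w)
    (ht : 0 ≤ t) (htw : t * w ≤ 1) :
    0 ≤ a + t * ((1 - 2 * a) * w) ∧ a + t * ((1 - 2 * a) * w) ≤ 1 := by
  rcases ha with rfl | rfl <;> constructor <;> nlinarith [mul_nonneg ht hw]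

lemma sign_mul_sub_nonneg {a u : ℝ} (ha : a = 0 ∨ a = 1) (hu : 0 ≤ u ∧ u ≤ 1) :
    0 ≤ (1 - 2 * a) * (u - a) := by
  rcases ha with rfl | rfl <;> nlinarith

lemma sign_mul_pos_iff {a v : ℝ} (ha : a = 0 ∨ a = 1) :
    0 < (1 - 2 * a) * v ↔ (a = 1 → v < 0) ∧ (a = 0 → 0 < v) := by
  rcases ha with rfl | rfl <;> norm_num

section Binary

variable {ι κ : Type*} [Fintype ι] [DecidableEq ι] {u0 : ι → ℝ}

lemma diagonal_sign_mul_self (hbin : ∀ x, u0 x = 0 ∨ u0 x = 1) :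
    diagonal (fun x ↦ 1 - 2 * u0 x) * diagonal (fun x ↦ 1 - 2 * u0 x) = 1 := by
  rw [diagonal_mul_diagonal, ← diagonal_one]
  congr 1
  funext x
  rcases hbin x with h | h <;> norm_num [h]

theorem unique_mem_box_iff_ker_mul_diagonal_sign (A : Matrix κ ι ℝ)
    (hbin : ∀ x, u0 x = 0 ∨ u0 x = 1) :
    (∀ u : ι → ℝ, A *ᵥ u = A *ᵥ u0 → (∀ x, 0 ≤ u x ∧ u x ≤ 1) → u = u0) ↔
    ∀ w : ι → ℝ, (A * diagonal (fun x ↦ 1 - 2 * u0 x)) *ᵥ w = 0 → 0 ≤ w → w = 0 := by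
  set D := diagonal (fun x ↦ 1 - 2 * u0 x)
  have hDD_mulVec (w : ι → ℝ) : D *ᵥ (D *ᵥ w) = w := by
    rw [mulVec_mulVec, diagonal_sign_mul_self hbin, one_mulVec]
  constructor
  · intro huniq w hADw hw
    have hpos : 0 < 1 + ∑ x, w x := by
      linarith [Finset.sum_nonneg (s := Finset.univ) fun x _ ↦ hw x]
    set t := (1 + ∑ x, w x)⁻¹
    have ht : 0 ≤ t := inv_nonneg.mpr hpos.le
    have htw (x : ι) : t * w x ≤ 1 := by
      rw [inv_mul_le_iff₀ hpos]
      linarith [Finset.single_le_sum (fun y _ ↦ hw y) (Finset.mem_univ x)]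
    have hu := huniq (u0 + t • D *ᵥ w)
      (by rw [mulVec_add, mulVec_smul, mulVec_mulVec, hADw, smul_zero, add_zero])
      (fun x ↦ by
        simpa [D, mulVec_diagonal] using
          add_mul_sign_mul_mem_unitInterval (hbin x) (hw x) ht (htw x))
    have ht0 : t ≠ 0 := inv_ne_zero hpos.ne'
    rw [add_eq_left, smul_eq_zero_iff_right ht0] at hu
    rw [← hDD_mulVec w, hu, mulVec_zero]
  · intro hker u hAu hbox
    have hw := hker (D *ᵥ (u - u0))
      (by rw [← mulVec_mulVec, hDD_mulVec, mulVec_sub, hAu, sub_self])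
      (fun x ↦ by simpa [D, mulVec_diagonal] using sign_mul_sub_nonneg (hbin x) (hbox x))
    rw [← sub_eq_zero, ← hDD_mulVec (u - u0), hw, mulVec_zero]

end Binary

/-- Theorem 2 of the paper (positive criterion): a binary vector `u0` is the unique
solution of (P1) iff some vector in the row space of `A` is strictly negative on the
support of `u0` and strictly positive off it. -/
theorem stmt_1 (m N : ℕ) (A : Matrix (Fin m) (Fin N) ℝ) (u0 : Fin N → ℝ)
    (hbin : ∀ x, u0 x = 0 ∨ u0 x = 1) :
    (∃ η : Fin m → ℝ,
        (∀ x, u0 x = 1 → A.transpose.mulVec η x < 0) ∧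
        (∀ x, u0 x = 0 → 0 < A.transpose.mulVec η x)) ↔
    (∀ u : Fin N → ℝ, A.mulVec u = A.mulVec u0 →
        (∀ x, 0 ≤ u x ∧ u x ≤ 1) → u = u0) := by
  rw [unique_mem_box_iff_ker_mul_diagonal_sign A hbin,
    ← exists_transpose_mulVec_pos_iff]
  simp only [transpose_mul, diagonal_transpose, ← mulVec_mulVec, mulVec_diagonal,
    sign_mul_pos_iff (hbin _), forall_and]
end

section
/- (Gordan–Stiemke alternative.) For any real m×n matrix A, exactly one of the following two statements holds: (1) there exists v ∈ ℝ^n with v ≥ 0 componentwise, v ≠ 0, and A v = 0; (2) there exists η ∈ ℝ^m such that every component of Aᵀη is strictly positive. -/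
/-!
If `Aᵀ η > 0` and `v ≥ 0`, `v ≠ 0`, then `η ⬝ᵥ A v = Aᵀ η ⬝ᵥ v > 0`, so `A v ≠ 0`: the two
alternatives exclude each other. Normalising `v` to sum one, alternative (1) says that `0` lies in
the convex hull of the columns of `A`. If it does not, this compact convex set is strictly separated
from `0` by a linear functional, which is `x ↦ η ⬝ᵥ x` for some `η`; its positivity on the columns
is alternative (2).
-/

open Matrix Set

namespace Matrix

variable {m n R : Type*} [Fintype n]

theorem dotProduct_pos_of_pos_of_nonneg_of_ne_zero [Semiring R] [PartialOrder R]
    [IsStrictOrderedRing R] {v w : n → R} (hv : ∀ i, 0 < v i) (hw : 0 ≤ w) (hw0 : w ≠ 0) :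
    0 < v ⬝ᵥ w := by
  obtain ⟨i, hi⟩ := Function.ne_iff.mp hw0
  exact Finset.sum_pos' (fun j _ => mul_nonneg (hv j).le (hw j))
    ⟨i, Finset.mem_univ i, mul_pos (hv i) ((hw i).lt_of_ne' hi)⟩

theorem not_forall_pos_transpose_mulVec [Fintype m] [CommSemiring R] [PartialOrder R]
    [IsStrictOrderedRing R] (A : Matrix m n R) {v : n → R} (hv : 0 ≤ v) (hv0 : v ≠ 0)
    (hAv : A *ᵥ v = 0) (η : m → R) :
    ¬∀ j, 0 < (Aᵀ *ᵥ η) j := fun hη => by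
  have h := dotProduct_pos_of_pos_of_nonneg_of_ne_zero hη hv hv0
  rwa [dotProduct_comm, dotProduct_transpose_mulVec, hAv, dotProduct_zero, lt_self_iff_false] at h

theorem image_mulVecLin_stdSimplex [Field R] [LinearOrder R] [IsStrictOrderedRing R]
    [DecidableEq n] (A : Matrix m n R) :
    A.mulVecLin '' stdSimplex R n = convexHull R (range Aᵀ) := by
  rw [← convexHull_rangle_single_eq_stdSimplex, LinearMap.image_convexHull, ← range_comp]
  congr
  funext j
  exact mulVec_single_one A j

theorem exists_nonneg_ne_zero_mulVec_eq_zero_iff [Field R] [LinearOrder R]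
    [IsStrictOrderedRing R] (A : Matrix m n R) :
    (∃ v : n → R, 0 ≤ v ∧ v ≠ 0 ∧ A *ᵥ v = 0) ↔ (0 : m → R) ∈ convexHull R (range Aᵀ) := by
  classical
  rw [← image_mulVecLin_stdSimplex]
  constructor
  · rintro ⟨v, hv, hv0, hAv⟩
    have hsum : 0 < ∑ j, v j := by
      simpa [one_dotProduct] using
        dotProduct_pos_of_pos_of_nonneg_of_ne_zero (v := 1) (fun _ => one_pos) hv hv0
    refine ⟨(∑ j, v j)⁻¹ • v, ⟨fun j => ?_, ?_⟩, ?_⟩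
    · exact mul_nonneg (inv_nonneg.mpr hsum.le) (hv j)
    · simp [← Finset.mul_sum, hsum.ne']
    · simp [hAv]
  · rintro ⟨w, ⟨hw, hw1⟩, hAw⟩
    refine ⟨w, hw, ?_, hAw⟩
    rintro rfl
    simp at hw1

theorem exists_pos_transpose_mulVec_of_zero_notMem_convexHull [Fintype m] (A : Matrix m n ℝ)
    (h : (0 : m → ℝ) ∉ convexHull ℝ (range Aᵀ)) : ∃ η : m → ℝ, ∀ j, 0 < (Aᵀ *ᵥ η) j := by
  classical
  obtain ⟨f, u, hf0, hfA⟩ := geometric_hahn_banach_point_closed (convex_convexHull ℝ _)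
    ((finite_range _).isCompact_convexHull ℝ).isClosed h
  set η := (dotProductEquiv ℝ m).symm f.toLinearMap
  have hf : ∀ x, f x = η ⬝ᵥ x := fun x => by
    rw [← ContinuousLinearMap.coe_coe, ← (dotProductEquiv ℝ m).apply_symm_apply f.toLinearMap]
    rfl
  refine ⟨η, fun j => ?_⟩
  rw [mulVec, dotProduct_comm, ← hf]
  exact (map_zero f ▸ hf0).trans (hfA _ (subset_convexHull ℝ _ (mem_range_self j)))

end Matrix

/-- The Gordan–Stiemke theorem of the alternative: exactly one of the two problems
(1) find a nonzero componentwise-nonnegative `v` with `A v = 0`, and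
(2) find `η` with all components of `Aᵀ η` strictly positive, is feasible. -/
theorem stmt_2 (m n : ℕ) (A : Matrix (Fin m) (Fin n) ℝ) :
    Xor' (∃ v : Fin n → ℝ, (∀ x, 0 ≤ v x) ∧ v ≠ 0 ∧ A.mulVec v = 0)
         (∃ η : Fin m → ℝ, ∀ x, 0 < A.transpose.mulVec η x) := by
  refine (xor_iff_or_and_not_and _ _).mpr ⟨?_, ?_⟩
  · by_cases h : (0 : Fin m → ℝ) ∈ convexHull ℝ (range Aᵀ)
    · exact Or.inl (A.exists_nonneg_ne_zero_mulVec_eq_zero_iff.mpr h)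
    · exact Or.inr (A.exists_pos_transpose_mulVec_of_zero_notMem_convexHull h)
  · rintro ⟨⟨v, hv, hv0, hAv⟩, η, hη⟩
    exact A.not_forall_pos_transpose_mulVec hv hv0 hAv η hη
end

section
/- Let N and d be positive integers with 2d < N. Let u0 : ZMod N → ℝ be a binary signal (u0(x) ∈ {0,1} for all x) whose number of jumps, card{x ∈ ZMod N : u0(x) ≠ u0(x+1)}, is at most 2d. If u : ZMod N → ℝ satisfies 0 ≤ u(x) ≤ 1 for all x and a_k(u) = a_k(u0) for every integer k with |k| ≤ d, then u = u0. -/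
/-! The difference `u - u0` has vanishing Fourier coefficients for `|k| ≤ d`; it is `≥ 0` where
`u0 = 0` and `≤ 0` where `u0 = 1`. The product `Q x = ∏ᵢ sin (π (i + 1/2 - x) / N)` over the jump
positions `i` of `u0` changes sign exactly at the jumps, so up to a global sign it has the sign
pattern of `1 - 2 u0`. Writing each sine as a combination of `e^{± iπx/N}`, `Q` becomes a
trigonometric polynomial with frequencies `m` with `|m| ≤ d` (the number of jumps is even and at
most `2d`), hence `∑ₓ (u x - u0 x) Q x = 0`. All terms of this sum have the same sign, so they
vanish, and `Q` has no zeros. -/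

open Finset

theorem even_card_filter_range_ne_succ_iff {α : Type*} [DecidableEq α] {f : ℕ → α} {a b : α}
    (hf : ∀ i, f i = a ∨ f i = b) (j : ℕ) :
    Even #{i ∈ range j | f i ≠ f (i + 1)} ↔ f j = f 0 := by
  induction j with
  | zero => simp
  | succ j ih =>
    rw [range_add_one, filter_insert]
    split_ifs with hjump
    · rw [card_insert_of_notMem (by simp), Nat.even_add_one, ih]
      rcases hf j with h | h <;> rcases hf (j + 1) with h' | h' <;> rcases hf 0 with h0 | h0 <;>
        simp_all [eq_comm]
    · rw [ih, not_ne_iff.mp hjump]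

theorem prod_pos_iff_even_card_filter_neg {ι R : Type*} [CommRing R] [LinearOrder R]
    [IsStrictOrderedRing R] [DecidableEq ι] {s : Finset ι} {f : ι → R} (hf : ∀ i ∈ s, f i ≠ 0) :
    0 < ∏ i ∈ s, f i ↔ Even #{i ∈ s | f i < 0} := by
  induction s using Finset.induction_on with
  | empty => simp
  | insert a s ha ih =>
    rw [forall_mem_insert] at hf
    have hprod : ∏ i ∈ s, f i ≠ 0 := prod_ne_zero_iff.mpr hf.2
    rw [prod_insert ha, filter_insert]
    split_ifs with hneg
    · rw [card_insert_of_notMem (fun h => ha (mem_filter.mp h).1), Nat.even_add_one, ← ih hf.2,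
        mul_pos_iff, not_lt]
      simp [hneg, hneg.not_gt, hprod.le_iff_lt]
    · rw [← ih hf.2, mul_pos_iff_of_pos_left (lt_of_le_of_ne (not_lt.mp hneg) hf.1.symm)]

section SignPattern

open Real

theorem sin_pi_mul_add_half_div_sub_neg {N i x : ℕ} (h : i < x) (hx : x < N) :
    sin (π * (i + 1 / 2) / N - π * x / N) < 0 := by
  have hix : (i : ℝ) + 1 ≤ x := by exact_mod_cast h
  have hxN : (x : ℝ) < N := by exact_mod_cast hx
  have hN : (0 : ℝ) < N := by linarith [(Nat.cast_nonneg i : (0 : ℝ) ≤ i)]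
  rw [← sub_div, ← mul_sub]
  apply sin_neg_of_neg_of_neg_pi_lt
  · exact div_neg_of_neg_of_pos (mul_neg_of_pos_of_neg pi_pos (by linarith)) hN
  · rw [lt_div_iff₀ hN]
    nlinarith [pi_pos, (Nat.cast_nonneg i : (0 : ℝ) ≤ i)]

theorem sin_pi_mul_add_half_div_sub_pos {N i x : ℕ} (h : x ≤ i) (hi : i < N) :
    0 < sin (π * (i + 1 / 2) / N - π * x / N) := by
  have hxi : (x : ℝ) ≤ i := by exact_mod_cast h
  have hiN : (i : ℝ) + 1 ≤ N := by exact_mod_cast hi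
  have hN : (0 : ℝ) < N := by linarith [(Nat.cast_nonneg i : (0 : ℝ) ≤ i)]
  rw [← sub_div, ← mul_sub]
  apply sin_pos_of_pos_of_lt_pi
  · exact div_pos (mul_pos pi_pos (by linarith)) hN
  · rw [div_lt_iff₀ hN]
    nlinarith [pi_pos, (Nat.cast_nonneg x : (0 : ℝ) ≤ x)]

theorem sin_pi_mul_add_half_div_sub_neg_iff {N i x : ℕ} (hi : i < N) (hx : x < N) :
    sin (π * (i + 1 / 2) / N - π * x / N) < 0 ↔ i < x :=
  ⟨fun h => not_le.mp fun h' => (sin_pi_mul_add_half_div_sub_pos h' hi).not_gt h,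
    fun h => sin_pi_mul_add_half_div_sub_neg h hx⟩

theorem sin_pi_mul_add_half_div_sub_ne_zero {N i x : ℕ} (hi : i < N) (hx : x < N) :
    sin (π * (i + 1 / 2) / N - π * x / N) ≠ 0 := by
  rcases lt_or_ge i x with h | h
  · exact (sin_pi_mul_add_half_div_sub_neg h hx).ne
  · exact (sin_pi_mul_add_half_div_sub_pos h hi).ne'

section Jumps

variable {N : ℕ} {α : Type*} [DecidableEq α]

def jumps (u : ZMod N → α) : Finset ℕ := {i ∈ range N | u i ≠ u (i + 1)}

theorem lt_of_mem_jumps {u : ZMod N → α} {i : ℕ} (hi : i ∈ jumps u) : i < N :=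
  mem_range.mp (mem_filter.mp hi).1

theorem ncard_setOf_ne_add_one_eq_card_jumps [NeZero N] (u : ZMod N → α) :
    {x : ZMod N | u x ≠ u (x + 1)}.ncard = #(jumps u) := by
  rw [← Set.ncard_coe_finset]
  refine (Set.ncard_congr (fun (i : ℕ) _ => (i : ZMod N)) ?_ ?_ ?_).symm
  · exact fun i hi => (mem_filter.mp (mem_coe.mp hi)).2
  · intro i j hi hj hij
    rw [← ZMod.val_cast_of_lt (lt_of_mem_jumps hi), hij, ZMod.val_cast_of_lt (lt_of_mem_jumps hj)]
  · intro x hx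
    exact ⟨x.val, by simpa [jumps, ZMod.val_lt] using hx, ZMod.natCast_zmod_val x⟩

theorem even_card_filter_jumps_lt_iff [NeZero N] {u : ZMod N → α} {a b : α}
    (hu : ∀ x, u x = a ∨ u x = b) (x : ZMod N) : Even #{i ∈ jumps u | i < x.val} ↔ u x = u 0 := by
  have h := even_card_filter_range_ne_succ_iff (f := fun i : ℕ => u i) (fun i => hu i) x.val
  simp only [Nat.cast_add_one, ZMod.natCast_zmod_val, Nat.cast_zero] at h
  rw [← h, jumps, filter_filter]
  congr! 2
  ext i
  simp only [mem_filter, mem_range]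
  have := x.val_lt
  exact ⟨fun ⟨_, hj, hi⟩ => ⟨hi, hj⟩, fun ⟨hi, hj⟩ => ⟨by omega, hj, hi⟩⟩

theorem even_card_jumps {u : ZMod N → α} {a b : α} (hu : ∀ x, u x = a ∨ u x = b) :
    Even #(jumps u) := by
  have h := even_card_filter_range_ne_succ_iff (f := fun i : ℕ => u i) (fun i => hu i) N
  simp only [Nat.cast_add_one, ZMod.natCast_self, Nat.cast_zero] at h
  exact h.mpr trivial

noncomputable def jumpProduct (u : ZMod N → α) (x : ZMod N) : ℝ :=
  ∏ i ∈ jumps u, sin (π * (i + 1 / 2) / N - π * x.val / N)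

theorem jumpProduct_ne_zero [NeZero N] (u : ZMod N → α) (x : ZMod N) : jumpProduct u x ≠ 0 :=
  prod_ne_zero_iff.mpr fun _ hi => sin_pi_mul_add_half_div_sub_ne_zero (lt_of_mem_jumps hi) x.val_lt

theorem jumpProduct_pos_iff [NeZero N] {u : ZMod N → α} {a b : α} (hu : ∀ x, u x = a ∨ u x = b)
    (x : ZMod N) : 0 < jumpProduct u x ↔ u x = u 0 := by
  rw [jumpProduct, prod_pos_iff_even_card_filter_neg
      fun _ hi => sin_pi_mul_add_half_div_sub_ne_zero (lt_of_mem_jumps hi) x.val_lt,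
    ← even_card_filter_jumps_lt_iff hu x,
    filter_congr fun _ hi => sin_pi_mul_add_half_div_sub_neg_iff (lt_of_mem_jumps hi) x.val_lt]

end Jumps

end SignPattern

section LowFrequencies

open Complex

theorem ofReal_sin_sub (β θ : ℝ) :
    (Real.sin (β - θ) : ℂ) =
      -exp (-β * I) / (2 * I) * exp (θ * I) + exp (β * I) / (2 * I) * exp (-θ * I) := by
  have h₁ : exp (-↑(β - θ) * I) = exp (-β * I) * exp (θ * I) := by
    rw [← exp_add]; push_cast; ring_nf
  have h₂ : exp (↑(β - θ) * I) = exp (β * I) * exp (-θ * I) := by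
    rw [← exp_add]; push_cast; ring_nf
  rw [ofReal_sin, sin, h₁, h₂]
  field_simp
  rw [I_sq]
  ring

theorem ofReal_prod_sin_sub_eq_sum_powerset {ι : Type*} [DecidableEq ι] (J : Finset ι)
    (β : ι → ℝ) : ∃ C : Finset ι → ℂ, ∀ θ : ℝ,
      ((∏ t ∈ J, Real.sin (β t - θ) : ℝ) : ℂ) =
        ∑ T ∈ J.powerset, C T * exp (((#T : ℂ) - #(J \ T)) * (θ * I)) := by
  refine ⟨fun T => (∏ t ∈ T, -exp (-β t * I) / (2 * I)) * ∏ t ∈ J \ T, exp (β t * I) / (2 * I),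
    fun θ => ?_⟩
  rw [ofReal_prod, prod_congr rfl fun t _ => ofReal_sin_sub (β t) θ, prod_add]
  refine sum_congr rfl fun T _ => ?_
  rw [prod_mul_distrib, prod_mul_distrib, prod_const, prod_const, ← exp_nat_mul, ← exp_nat_mul,
    mul_mul_mul_comm, ← exp_add]
  congr 2
  ring

noncomputable def dftCoeff {N : ℕ} [NeZero N] (u : ZMod N → ℝ) (k : ℤ) : ℂ :=
  ∑ x : ZMod N, (u x : ℂ) *
    Complex.exp (-(2 * Real.pi * Complex.I) * (k : ℂ) * (x.val : ℂ) / (N : ℂ))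

theorem exists_card_sub_card_sdiff_eq_neg_two_mul {ι : Type*} [DecidableEq ι] {d : ℕ}
    {J T : Finset ι} (hJ : #J ≤ 2 * d) (hJeven : Even #J) (hT : T ⊆ J) :
    ∃ k : ℤ, |k| ≤ d ∧ (#T : ℂ) - #(J \ T) = -2 * k := by
  obtain ⟨m, hm⟩ := hJeven
  have hcard := card_sdiff_add_card_eq_card hT
  refine ⟨m - #T, abs_le.mpr ⟨by omega, by omega⟩, ?_⟩
  have : (#T : ℤ) - #(J \ T) = -2 * (m - #T) := by omega
  exact_mod_cast this

theorem sum_mul_prod_sin_sub_eq_of_dftCoeff_eq {N d : ℕ} [NeZero N] {u w : ZMod N → ℝ}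
    (h : ∀ k : ℤ, |k| ≤ d → dftCoeff u k = dftCoeff w k) {ι : Type*} [DecidableEq ι]
    {J : Finset ι} (hJ : #J ≤ 2 * d) (hJeven : Even #J) (β : ι → ℝ) :
    ∑ x, u x * ∏ t ∈ J, Real.sin (β t - Real.pi * x.val / N) =
      ∑ x, w x * ∏ t ∈ J, Real.sin (β t - Real.pi * x.val / N) := by
  obtain ⟨C, hC⟩ := ofReal_prod_sin_sub_eq_sum_powerset J β
  have hexpand (v : ZMod N → ℝ) :
      ((∑ x, v x * ∏ t ∈ J, Real.sin (β t - Real.pi * x.val / N) : ℝ) : ℂ) =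
        ∑ T ∈ J.powerset, C T * ∑ x : ZMod N, (v x : ℂ) *
          exp (((#T : ℂ) - #(J \ T)) * (↑(Real.pi * x.val / N) * I)) := by
    simp_rw [ofReal_sum, ofReal_mul, hC, mul_sum]
    rw [sum_comm]
    simp_rw [mul_left_comm]
  apply ofReal_injective
  rw [hexpand, hexpand]
  refine sum_congr rfl fun T hT => ?_
  obtain ⟨k, hk, hkT⟩ := exists_card_sub_card_sdiff_eq_neg_two_mul hJ hJeven (mem_powerset.mp hT)
  have hdft (v : ZMod N → ℝ) : ∑ x : ZMod N, (v x : ℂ) *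
      exp (((#T : ℂ) - #(J \ T)) * (↑(Real.pi * x.val / N) * I)) = dftCoeff v k := by
    refine sum_congr rfl fun x _ => ?_
    rw [hkT]
    push_cast
    ring_nf
  rw [hdft, hdft, h k hk]

end LowFrequencies

theorem stmt_4_general (N d : ℕ) [NeZero N]
    (u0 : ZMod N → ℝ) (hbin : ∀ x, u0 x = 0 ∨ u0 x = 1)
    (hjumps : {x : ZMod N | u0 x ≠ u0 (x + 1)}.ncard ≤ 2 * d)
    (u : ZMod N → ℝ) (hbox : ∀ x, 0 ≤ u x ∧ u x ≤ 1)
    (hfreq : ∀ k : ℤ, |k| ≤ (d : ℤ) →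
      (∑ x : ZMod N, (u x : ℂ) *
          Complex.exp (-(2 * Real.pi * Complex.I) * (k : ℂ) * (x.val : ℂ) / (N : ℂ))) =
      (∑ x : ZMod N, (u0 x : ℂ) *
          Complex.exp (-(2 * Real.pi * Complex.I) * (k : ℂ) * (x.val : ℂ) / (N : ℂ)))) :
    u = u0 := by
  have hJ : #(jumps u0) ≤ 2 * d := ncard_setOf_ne_add_one_eq_card_jumps u0 ▸ hjumps
  have horth : ∑ x, (u x - u0 x) * jumpProduct u0 x = 0 := by
    simp_rw [sub_mul]
    rw [sum_sub_distrib, sub_eq_zero]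
    exact sum_mul_prod_sin_sub_eq_of_dftCoeff_eq hfreq hJ (even_card_jumps hbin)
      fun i : ℕ => Real.pi * (i + 1 / 2) / N
  have hunit : 1 - 2 * u0 0 ≠ 0 := by rcases hbin 0 with h | h <;> norm_num [h]
  -- multiplying by `1 - 2 * u0 0 = ±1` makes every term nonnegative
  have hterm (x : ZMod N) : 0 ≤ (u x - u0 x) * jumpProduct u0 x * (1 - 2 * u0 0) := by
    have hpos := jumpProduct_pos_iff hbin x
    obtain ⟨hu0, hu1⟩ := hbox x
    rcases hbin x with hx | hx <;> rcases hbin 0 with h0 | h0 <;> rw [hx, h0] at hpos ⊢ <;>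
      norm_num at hpos ⊢ <;> nlinarith
  have hzero := (sum_eq_zero_iff_of_nonneg fun x _ => hterm x).mp
    (by rw [← sum_mul, horth, zero_mul])
  funext x
  simpa [jumpProduct_ne_zero u0 x, hunit, sub_eq_zero] using hzero x (mem_univ x)

/-- Theorem (reconstruction of 1D binary signals from low frequencies): a binary
signal on `ZMod N` with at most `2d` jumps is uniquely determined, among all
`[0,1]`-valued signals, by its Fourier coefficients `a_k` for `|k| ≤ d`. -/
theorem stmt_4 (N d : ℕ) [NeZero N] (hd : 0 < d) (h2d : 2 * d < N)
    (u0 : ZMod N → ℝ) (hbin : ∀ x, u0 x = 0 ∨ u0 x = 1)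
    (hjumps : {x : ZMod N | u0 x ≠ u0 (x + 1)}.ncard ≤ 2 * d)
    (u : ZMod N → ℝ) (hbox : ∀ x, 0 ≤ u x ∧ u x ≤ 1)
    (hfreq : ∀ k : ℤ, |k| ≤ (d : ℤ) →
      (∑ x : ZMod N, (u x : ℂ) *
          Complex.exp (-(2 * Real.pi * Complex.I) * (k : ℂ) * (x.val : ℂ) / (N : ℂ))) =
      (∑ x : ZMod N, (u0 x : ℂ) *
          Complex.exp (-(2 * Real.pi * Complex.I) * (k : ℂ) * (x.val : ℂ) / (N : ℂ)))) :
    u = u0 :=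
  stmt_4_general N d u0 hbin hjumps u hbox hfreq
end

section
/- Let A be a real m×n matrix and u0 ∈ ℝ^n with u0(x) ≥ 0 for all x, and let K = {x : u0(x) ≠ 0} be its support. Assume the columns of A indexed by K are linearly independent. Then the following are equivalent: (i) u0 is the unique vector u ∈ ℝ^n satisfying A u = A u0 and u(x) ≥ 0 for all x; (ii) there exists η ∈ ℝ^m such that the vector v = Aᵀη satisfies v(x) = 0 for every x ∈ K and v(x) > 0 for every x ∉ K. -/
/-!
(ii) ⇒ (i): with `v = Aᵀ η`, every nonnegative solution `u` satisfies `v ⬝ᵥ u = η ⬝ᵥ A u =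
v ⬝ᵥ u₀ = 0`, and since `v > 0` off `K` this forces `u = 0` off `K`. Then `u - u₀` is a kernel
vector supported on `K`, hence zero by the independence of those columns.

(i) ⇒ (ii): if `d ∈ ker A` is nonnegative off `K`, then `u₀ + ε d` is a nonnegative solution
for small `ε > 0`, so uniqueness gives `d = 0`. By Stiemke's transposition theorem (separate the
kernel from a face of the standard simplex) some `v ⊥ ker A` vanishes on `K` and is positive
off `K`, and `v ⊥ ker A` means that `v` lies in the row space of `A`.
-/

open Matrix Filter Topology

theorem Matrix.mulVec_eq_sum_smul_col {R m n : Type*} [CommSemiring R] [Fintype n]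
    (A : Matrix m n R) (d : n → R) : A *ᵥ d = ∑ x, d x • A.col x := by
  ext i
  simp [mulVec, dotProduct, mul_comm]

theorem Matrix.eq_zero_of_mulVec_eq_zero_of_linearIndepOn_col {R m n : Type*} [CommRing R]
    [Fintype n] (A : Matrix m n R) {s : Set n} (hs : LinearIndepOn R A.col s)
    {d : n → R} (hd : A *ᵥ d = 0) (hds : ∀ x ∉ s, d x = 0) : d = 0 := by
  classical
  rw [linearIndepOn_iff''] at hs
  funext x
  by_cases hx : x ∈ s
  · refine hs (Finset.univ.filter (· ∈ s)) d (by simp) (by simpa using hds) ?_ x (by simpa)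
    rw [Finset.sum_filter_of_ne fun x _ hx => by_contra fun hxs => hx (by simp [hds x hxs]),
      ← mulVec_eq_sum_smul_col, hd]
  · exact hds x hx

theorem Matrix.exists_transpose_mulVec_eq_of_dotProduct_eq_zero {K m n : Type*} [Field K]
    [Fintype m] [Fintype n] (A : Matrix m n K) {v : n → K}
    (hv : ∀ w, A *ᵥ w = 0 → v ⬝ᵥ w = 0) : ∃ η, Aᵀ *ᵥ η = v := by
  classical
  have hann : dotProductEquiv K n v ∈ (LinearMap.ker A.mulVecLin).dualAnnihilator :=
    (Submodule.mem_dualAnnihilator _).2 fun w hw => hv w hw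
  rw [← LinearMap.range_dualMap_eq_dualAnnihilator_ker] at hann
  obtain ⟨φ, hφ⟩ := hann
  obtain ⟨η, rfl⟩ := (dotProductEquiv K m).surjective φ
  refine ⟨η, (dotProductEquiv K n).injective (hφ ▸ LinearMap.ext fun w => ?_)⟩
  simp [mulVec_transpose, dotProduct_mulVec]

theorem dotProduct_eq_zero_of_eq_zero_on_support {R ι : Type*} [NonUnitalNonAssocSemiring R]
    [Fintype ι] {v u : ι → R} (h : ∀ i, u i ≠ 0 → v i = 0) : v ⬝ᵥ u = 0 :=
  Finset.sum_eq_zero fun i _ => by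
    by_cases hi : u i = 0
    · rw [hi, mul_zero]
    · rw [h i hi, zero_mul]

theorem eq_zero_of_dotProduct_eq_zero_of_nonneg {R ι : Type*} [Semiring R] [PartialOrder R]
    [IsOrderedRing R] [NoZeroDivisors R] [Fintype ι] {v u : ι → R} (hv : 0 ≤ v) (hu : 0 ≤ u)
    (h : v ⬝ᵥ u = 0) {i : ι} (hi : 0 < v i) : u i = 0 := by
  have := (Finset.sum_eq_zero_iff_of_nonneg fun j _ => mul_nonneg (hv j) (hu j)).1 h i
    (Finset.mem_univ i)
  exact (mul_eq_zero.1 this).resolve_left hi.ne'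

theorem exists_pos_nonneg_add_smul {ι : Type*} [Finite ι] {u d : ι → ℝ} (hu : 0 ≤ u)
    (hd : ∀ i, u i = 0 → 0 ≤ d i) : ∃ ε : ℝ, 0 < ε ∧ 0 ≤ u + ε • d := by
  have h : ∀ i, ∀ᶠ ε in 𝓝[>] (0 : ℝ), 0 ≤ u i + ε * d i := fun i => by
    rcases (show 0 ≤ u i from hu i).eq_or_lt with hi | hi
    · filter_upwards [self_mem_nhdsWithin] with ε hε
      rw [← hi, zero_add]
      exact mul_nonneg (le_of_lt hε) (hd i hi.symm)
    · have : Tendsto (fun ε => u i + ε * d i) (𝓝[>] 0) (𝓝 (u i)) :=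
        tendsto_nhdsWithin_of_tendsto_nhds <|
          (by fun_prop : Continuous fun ε : ℝ => u i + ε * d i).tendsto' 0 _ (by simp)
      exact (this.eventually (lt_mem_nhds hi)).mono fun _ => le_of_lt
  obtain ⟨ε, hεd, hε⟩ := ((eventually_all.2 h).and self_mem_nhdsWithin).exists
  exact ⟨ε, hε, fun i => hεd i⟩

theorem Matrix.eq_zero_of_unique_nonneg_solution {m n : Type*} [Fintype n] (A : Matrix m n ℝ)
    {u₀ : n → ℝ} (hu₀ : 0 ≤ u₀) (huniq : ∀ u, A *ᵥ u = A *ᵥ u₀ → 0 ≤ u → u = u₀) {d : n → ℝ}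
    (hd : A *ᵥ d = 0) (hd₀ : ∀ i, u₀ i = 0 → 0 ≤ d i) : d = 0 := by
  obtain ⟨ε, hε, hεd⟩ := exists_pos_nonneg_add_smul hu₀ hd₀
  have := huniq (u₀ + ε • d) (by rw [mulVec_add, mulVec_smul, hd, smul_zero, add_zero]) hεd
  simpa [hε.ne'] using this

theorem Submodule.exists_dotProduct_eq_zero_pos_on {ι : Type*} [Fintype ι]
    (W : Submodule ℝ (ι → ℝ)) (s : Set ι) (hW : ∀ w ∈ W, 0 ≤ w → ∀ i ∈ s, w i = 0) :
    ∃ v : ι → ℝ, (∀ w ∈ W, v ⬝ᵥ w = 0) ∧ ∀ i ∈ s, 0 < v i := by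
  classical
  let V : Submodule ℝ (ι → ℝ) := Submodule.pi sᶜ fun _ => ⊥
  have hdisj : Disjoint (W : Set (ι → ℝ)) (stdSimplex ℝ ι ∩ V) := by
    refine Set.disjoint_left.2 fun w hwW ⟨⟨hw0, hw1⟩, hwV⟩ => ?_
    have hw : w = 0 := funext fun i => by
      by_cases hi : i ∈ s
      · exact hW w hwW hw0 i hi
      · exact (Submodule.mem_pi.1 hwV) i hi
    simp [hw] at hw1
  obtain ⟨f, a, b, hfW, hab, hfP⟩ := geometric_hahn_banach_closed_compact W.convex
    W.closed_of_finiteDimensional ((convex_stdSimplex ℝ ι).inter V.convex)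
    ((isCompact_stdSimplex ℝ ι).inter_right V.closed_of_finiteDimensional) hdisj
  have ha : 0 < a := by simpa using hfW 0 W.zero_mem
  -- a linear functional bounded above on a subspace vanishes there
  have hf : ∀ w ∈ W, f w = 0 := fun w hw => by
    by_contra h
    have := hfW ((a / f w) • w) (W.smul_mem _ hw)
    rw [map_smul, smul_eq_mul, div_mul_cancel₀ _ h] at this
    exact this.false
  refine ⟨(dotProductEquiv ℝ ι).symm f, fun w hw => ?_, fun i hi => ?_⟩
  · rw [← hf w hw, ← dotProductEquiv_apply_apply, LinearEquiv.apply_symm_apply]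
    rfl
  · have : Pi.single i 1 ∈ stdSimplex ℝ ι ∩ V :=
      ⟨single_mem_stdSimplex ℝ i, Submodule.mem_pi.2 fun j hj => by
        simp [show j ≠ i by rintro rfl; exact hj hi]⟩
    simpa using (hab.trans (hfP _ this)).trans' ha

theorem Submodule.exists_dotProduct_eq_zero_pos_on_eq_zero_off {ι : Type*} [Fintype ι]
    (W : Submodule ℝ (ι → ℝ)) (s : Set ι)
    (hW : ∀ w ∈ W, (∀ i ∈ s, 0 ≤ w i) → ∀ i ∈ s, w i = 0) :
    ∃ v : ι → ℝ, (∀ w ∈ W, v ⬝ᵥ w = 0) ∧ (∀ i ∉ s, v i = 0) ∧ ∀ i ∈ s, 0 < v i := by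
  classical
  let V : Submodule ℝ (ι → ℝ) := Submodule.pi s fun _ => ⊥
  obtain ⟨v, hv, hpos⟩ := (W ⊔ V).exists_dotProduct_eq_zero_pos_on s fun w hw hw0 i hi => by
    obtain ⟨d, hd, k, hk, rfl⟩ := Submodule.mem_sup.1 hw
    have hks : ∀ i ∈ s, k i = 0 := Submodule.mem_pi.1 hk
    simpa [hks i hi] using hW d hd (fun j hj => by simpa [hks j hj] using hw0 j) i hi
  refine ⟨v, fun w hw => hv w (Submodule.mem_sup_left hw), fun i hi => ?_, hpos⟩
  rw [← dotProduct_single_one v i]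
  refine hv _ (Submodule.mem_sup_right (Submodule.mem_pi.2 fun j hj => ?_))
  simp [show j ≠ i by rintro rfl; exact hi hj]

/-- Theorem (uniqueness of nonnegative solutions): for a nonnegative vector `u0`
supported on `K`, assuming the columns of `A` indexed by `K` are linearly independent,
`u0` is the unique nonnegative solution of `A u = A u0` iff some vector `v = Aᵀ η`
in the row space vanishes on `K` and is strictly positive off `K`. -/
theorem stmt_7 (m n : ℕ) (A : Matrix (Fin m) (Fin n) ℝ) (u0 : Fin n → ℝ)
    (hpos : ∀ x, 0 ≤ u0 x)
    (hind : LinearIndependent ℝ fun x : {x : Fin n // u0 x ≠ 0} => fun i => A i x.val) :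
    (∀ u : Fin n → ℝ, A.mulVec u = A.mulVec u0 → (∀ x, 0 ≤ u x) → u = u0) ↔
    (∃ η : Fin m → ℝ,
        (∀ x, u0 x ≠ 0 → A.transpose.mulVec η x = 0) ∧
        (∀ x, u0 x = 0 → 0 < A.transpose.mulVec η x)) := by
  constructor
  · intro huniq
    obtain ⟨v, hvker, hvK, hvpos⟩ :=
      (LinearMap.ker A.mulVecLin).exists_dotProduct_eq_zero_pos_on_eq_zero_off {x | u0 x = 0}
        fun d hd hd₀ => by simp [A.eq_zero_of_unique_nonneg_solution hpos huniq hd hd₀]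
    obtain ⟨η, rfl⟩ := A.exists_transpose_mulVec_eq_of_dotProduct_eq_zero fun w hw => hvker w hw
    exact ⟨η, hvK, hvpos⟩
  · rintro ⟨η, hηK, hηpos⟩ u hAu hu
    have hv : 0 ≤ Aᵀ *ᵥ η := fun x => by
      by_cases hx : u0 x = 0
      · exact (hηpos x hx).le
      · exact (hηK x hx).ge
    have hvu : (Aᵀ *ᵥ η) ⬝ᵥ u = 0 := by
      rw [mulVec_transpose, ← dotProduct_mulVec, hAu, dotProduct_mulVec, ← mulVec_transpose]
      exact dotProduct_eq_zero_of_eq_zero_on_support hηK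
    have hu_off : ∀ x, u0 x = 0 → u x = 0 := fun x hx =>
      eq_zero_of_dotProduct_eq_zero_of_nonneg hv hu hvu (hηpos x hx)
    refine sub_eq_zero.1 (A.eq_zero_of_mulVec_eq_zero_of_linearIndepOn_col (s := {x | u0 x ≠ 0})
      hind (by rw [mulVec_sub, hAu, sub_self]) fun x hx => ?_)
    have hx : u0 x = 0 := not_not.1 hx
    rw [Pi.sub_apply, hx, hu_off x hx, sub_self]
end

section
/- Let N and d be positive integers with 2d < N. Let u0 : ZMod N → ℝ satisfy u0(x) ≥ 0 for all x and have support of cardinality at most d, i.e. card{x : u0(x) ≠ 0} ≤ d. If u : ZMod N → ℝ satisfies u(x) ≥ 0 for all x and a_k(u) = a_k(u0) for every integer k with |k| ≤ d, then u = u0. -/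
/-! On the unit circle `conj z = z⁻¹`, so for a polynomial `p` of degree `≤ d` the weight
`|p(z)|² = p(z) · conj (p(z))` is a combination of the powers `z ^ j` with `|j| ≤ d`, and the
signed measure `u - u₀` integrates it to zero. With `p = ∏_{s ∈ supp u₀} (X - z s)` the weight
vanishes on `supp u₀` and is positive elsewhere, so `u ≥ 0` forces `u` to live on `supp u₀`.
There `u - u₀` is supported on at most `d` points with vanishing moments `z ^ k`, `0 ≤ k < d`,
and Lagrange interpolation shows it is zero. -/

open Complex ComplexConjugate Polynomial Finset

section

variable {ι : Type*} [Fintype ι]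

theorem sum_mul_eval_eq_zero {R : Type*} [CommSemiring R] {v z : ι → R} {n : ℕ}
    (hv : ∀ k ≤ n, ∑ x, v x * z x ^ k = 0) {p : R[X]} (hp : p.natDegree ≤ n) :
    ∑ x, v x * p.eval (z x) = 0 := by
  simp_rw [eval_eq_sum_range' (Nat.lt_add_one_iff.mpr hp), mul_sum, mul_left_comm (v _)]
  rw [sum_comm]
  refine sum_eq_zero fun k hk => ?_
  rw [← mul_sum, hv k (mem_range_succ_iff.mp hk), mul_zero]

theorem eq_zero_of_sum_mul_pow_eq_zero {F : Type*} [Field F] [DecidableEq ι] {v z : ι → F}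
    {S : Finset ι} (hvS : ∀ x ∉ S, v x = 0) (hz : Set.InjOn z S)
    (hv : ∀ k < #S, ∑ x, v x * z x ^ k = 0) (x : ι) : v x = 0 := by
  by_cases hx : x ∈ S
  · have hSpos := card_pos.mpr ⟨x, hx⟩
    have hsum := sum_mul_eval_eq_zero (fun k hk => hv k (by omega))
      (Lagrange.natDegree_basis hz hx).le
    rwa [sum_eq_single x, Lagrange.eval_basis_self hz hx, mul_one] at hsum
    · intro y _ hyx
      by_cases hy : y ∈ S
      · rw [Lagrange.eval_basis_of_ne hyx.symm hy, mul_zero]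
      · rw [hvS y hy, zero_mul]
    · exact fun h => absurd (mem_univ x) h
  · exact hvS x hx

theorem sum_mul_normSq_eval_eq_zero {v z : ι → ℂ} {d : ℕ} (hz : ∀ x, ‖z x‖ = 1)
    (hv : ∀ j : ℤ, |j| ≤ d → ∑ x, v x * z x ^ j = 0) {p : ℂ[X]} (hp : p.natDegree ≤ d) :
    ∑ x, v x * normSq (p.eval (z x)) = 0 := by
  have hz0 : ∀ x, z x ≠ 0 := fun x => norm_ne_zero_iff.mp (by simp [hz x])
  have hconj : ∀ x,
      conj (p.eval (z x)) = ∑ j ∈ range (d + 1), conj (p.coeff j) * z x ^ (-(j : ℤ)) := by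
    intro x
    rw [eval_eq_sum_range' (Nat.lt_add_one_iff.mpr hp), map_sum]
    simp only [map_mul, map_pow, zpow_neg, zpow_natCast, ← inv_pow, inv_eq_conj (hz x)]
  calc ∑ x, v x * normSq (p.eval (z x))
      = ∑ x, v x * (p.eval (z x) * conj (p.eval (z x))) := by simp_rw [mul_conj]
    _ = ∑ j ∈ range (d + 1), conj (p.coeff j) * ∑ x, v x * z x ^ (-(j : ℤ)) * p.eval (z x) := by
      simp_rw [hconj, mul_sum]
      rw [sum_comm]
      refine sum_congr rfl fun j _ => sum_congr rfl fun x _ => by ring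
    _ = 0 := by
      refine sum_eq_zero fun j hj => ?_
      rw [sum_mul_eval_eq_zero (fun k hk => ?_) hp, mul_zero]
      have hj' := mem_range_succ_iff.mp hj
      simp_rw [mul_assoc, ← zpow_natCast, ← zpow_add₀ (hz0 _)]
      exact hv _ (abs_le.mpr ⟨by omega, by omega⟩)

theorem eq_of_sum_mul_zpow_eq [DecidableEq ι] {d : ℕ} {z : ι → ℂ}
    (hz : ∀ x, ‖z x‖ = 1) (hinj : Function.Injective z) {u u₀ : ι → ℝ} (hu : ∀ x, 0 ≤ u x)
    {S : Finset ι} (hS : #S ≤ d) (hu₀ : ∀ x ∉ S, u₀ x = 0)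
    (h : ∀ j : ℤ, |j| ≤ d → ∑ x, (u x : ℂ) * z x ^ j = ∑ x, (u₀ x : ℂ) * z x ^ j) :
    u = u₀ := by
  have hv : ∀ j : ℤ, |j| ≤ d → ∑ x, ((u x : ℂ) - u₀ x) * z x ^ j = 0 := fun j hj => by
    simp_rw [sub_mul, sum_sub_distrib, h j hj, sub_self]
  set w : ι → ℝ := fun x => normSq ((Lagrange.nodal S z).eval (z x))
  have hw : ∑ x, (u x - u₀ x) * w x = 0 := by
    exact_mod_cast sum_mul_normSq_eval_eq_zero hz hv (Lagrange.natDegree_nodal.trans_le hS)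
  have hu₀w : ∀ x, u₀ x * w x = 0 := fun x => by
    by_cases hx : x ∈ S
    · simp [w, Lagrange.eval_nodal_at_node hx]
    · simp [hu₀ x hx]
  have huS : ∀ x ∉ S, u x = 0 := by
    simp_rw [sub_mul, sum_sub_distrib, hu₀w, sum_const_zero, sub_zero] at hw
    intro x hx
    have hwx : w x ≠ 0 := normSq_eq_zero.not.mpr <|
      Lagrange.eval_nodal_not_at_node fun s hs hxs => hx (hinj hxs ▸ hs)
    have huw := (sum_eq_zero_iff_of_nonneg fun y _ => mul_nonneg (hu y) (normSq_nonneg _)).mp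
      hw x (mem_univ x)
    exact (mul_eq_zero.mp huw).resolve_right hwx
  funext x
  have := eq_zero_of_sum_mul_pow_eq_zero (v := fun x => (u x : ℂ) - u₀ x) (S := S)
    (fun x hx => by simp [huS x hx, hu₀ x hx]) hinj.injOn
    (fun k hk => by exact_mod_cast hv k (by rw [abs_of_nonneg k.cast_nonneg]; omega)) x
  exact_mod_cast sub_eq_zero.mp this

end

theorem stmt_8_general (N d : ℕ) [NeZero N]
    (u0 : ZMod N → ℝ)
    (hsupp : {x : ZMod N | u0 x ≠ 0}.ncard ≤ d)
    (u : ZMod N → ℝ) (hupos : ∀ x, 0 ≤ u x)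
    (hfreq : ∀ k : ℤ, |k| ≤ (d : ℤ) →
      (∑ x : ZMod N, (u x : ℂ) *
          Complex.exp (-(2 * Real.pi * Complex.I) * (k : ℂ) * (x.val : ℂ) / (N : ℂ))) =
      (∑ x : ZMod N, (u0 x : ℂ) *
          Complex.exp (-(2 * Real.pi * Complex.I) * (k : ℂ) * (x.val : ℂ) / (N : ℂ)))) :
    u = u0 := by
  classical
  have hexp (k : ℤ) (x : ZMod N) :
      exp (-(2 * Real.pi * I) * k * x.val / N) = ZMod.stdAddChar x ^ (-k) := by
    rw [ZMod.stdAddChar_apply, ZMod.toCircle_apply, ← exp_int_mul]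
    congr 1
    push_cast
    ring
  refine eq_of_sum_mul_zpow_eq (d := d) (fun x => Circle.norm_coe _) ZMod.injective_stdAddChar
    hupos (S := {x | u0 x ≠ 0}.toFinset) (by rwa [← Set.ncard_eq_toFinset_card'])
    (fun x hx => by simpa using hx) fun j hj => ?_
  have h := hfreq (-j) (by rwa [abs_neg])
  simp_rw [hexp, neg_neg] at h
  exact h

/-- Theorem (reconstruction of sparse nonnegative signals from low frequencies): a
nonnegative signal on `ZMod N` supported on at most `d` points is uniquely determined,
among nonnegative signals, by its Fourier coefficients `a_k` for `|k| ≤ d`. -/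
theorem stmt_8 (N d : ℕ) [NeZero N] (hd : 0 < d) (h2d : 2 * d < N)
    (u0 : ZMod N → ℝ) (hpos : ∀ x, 0 ≤ u0 x)
    (hsupp : {x : ZMod N | u0 x ≠ 0}.ncard ≤ d)
    (u : ZMod N → ℝ) (hupos : ∀ x, 0 ≤ u x)
    (hfreq : ∀ k : ℤ, |k| ≤ (d : ℤ) →
      (∑ x : ZMod N, (u x : ℂ) *
          Complex.exp (-(2 * Real.pi * Complex.I) * (k : ℂ) * (x.val : ℂ) / (N : ℂ))) =
      (∑ x : ZMod N, (u0 x : ℂ) *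
          Complex.exp (-(2 * Real.pi * Complex.I) * (k : ℂ) * (x.val : ℂ) / (N : ℂ)))) :
    u = u0 :=
  stmt_8_general N d u0 hsupp u hupos hfreq
end

section
/- Let d > 0 be a real number and let v(x,y) = Σ_{(j,k): j²+k²≤d²} a(j,k)·e^{2πi(jx+ky)} be a real-valued ℤ²-periodic function on ℝ², with coefficients satisfying a(−j,−k) = conj(a(j,k)). Let p, q be coprime integers with q ≥ 1. Assume that for every s ∈ [0,1), the 1-periodic function t ↦ v(t, s + t·p/q) is not identically zero (so its zero set in [0,1) is finite). Then the average number of zero-crossings along lines of slope p/q satisfies ∫₀¹ card{t ∈ [0,1) : v(t, s + t·p/q) = 0} ds ≤ 2·d·√(p² + q²)/q; equivalently, with cos θ = q/√(p²+q²), the average directional number of zero-crossings K_θ = cos θ · ∫₀¹ card{t ∈ [0,1) : v(t, s + t·tan θ) = 0} ds is at most 2d. -/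
/-!
Along the line of slope `p / q` through `(0, s)`, `v` restricts to a trigonometric polynomial of
period `q` in `t` whose frequencies `jq + kp` are bounded by `N = ⌊d √(p² + q²)⌋` (Cauchy–Schwarz).
Multiplied by `e^{2πiNt/q}` it becomes a polynomial of degree at most `2N` in `e^{2πit/q}`, which
is injective on `[0, q)`, so it has at most `2N` zeros there. As `v` is `1`-periodic in `x`, its
zeros on `[r, r + 1)` are the zeros on `[0, 1)` of the line through height `s + rp/q`; so the
zero count on `[0, 1)`, summed over the `q` heights `s + rp/q`, is at most `2N`, and integrating
over `s` (the count is `1`-periodic in `s`) gives `q ∫₀¹ ≤ 2d √(p² + q²)`.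
-/

open Complex Polynomial Set Function
open scoped Real

noncomputable section

def trigSum {ι : Type*} (S : Finset ι) (b : ι → ℂ) (n : ι → ℤ) (c t : ℝ) : ℂ :=
  ∑ i ∈ S, b i * exp (2 * π * I * n i * t / c)

theorem injOn_exp_two_pi_I_mul_div {c : ℝ} (hc : 0 < c) :
    InjOn (fun t : ℝ => exp (2 * π * I * t / c)) (Ico 0 c) := by
  intro t₁ ht₁ t₂ ht₂ h
  obtain ⟨m, hm⟩ := exp_eq_exp_iff_exists_int.mp h
  have hc' : (c : ℂ) ≠ 0 := by exact_mod_cast hc.ne'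
  field_simp at hm
  have hm_re : t₁ = t₂ + c * m := by exact_mod_cast hm
  obtain rfl : m = 0 := by
    have : -1 < (m : ℝ) ∧ (m : ℝ) < 1 := by
      constructor <;> nlinarith [ht₁.1, ht₁.2, ht₂.1, ht₂.2]
    have : -1 < m ∧ m < 1 := by exact_mod_cast this
    omega
  simpa using hm_re

def trigSum.toPolynomial {ι : Type*} (S : Finset ι) (b : ι → ℂ) (n : ι → ℤ) (N : ℕ) : ℂ[X] :=
  ∑ i ∈ S, C (b i) * X ^ (n i + N).toNat

section
variable {ι : Type*} {S : Finset ι} {b : ι → ℂ} {n : ι → ℤ} {N : ℕ}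

theorem trigSum.natDegree_toPolynomial_le (hn : ∀ i ∈ S, b i ≠ 0 → (n i).natAbs ≤ N) :
    (trigSum.toPolynomial S b n N).natDegree ≤ 2 * N := by
  refine natDegree_sum_le_of_forall_le _ _ fun i hi => ?_
  by_cases hbi : b i = 0
  · simp [hbi]
  · grw [natDegree_C_mul_le, natDegree_X_pow]
    have := hn i hi hbi
    omega

theorem trigSum.eval_toPolynomial (hn : ∀ i ∈ S, b i ≠ 0 → (n i).natAbs ≤ N) (c t : ℝ) :
    (trigSum.toPolynomial S b n N).eval (exp (2 * π * I * t / c)) =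
      exp (2 * π * I * t / c) ^ N * trigSum S b n c t := by
  rw [trigSum.toPolynomial, eval_finsetSum, trigSum, Finset.mul_sum]
  refine Finset.sum_congr rfl fun i hi => ?_
  by_cases hbi : b i = 0
  · simp [hbi]
  have hnN : 0 ≤ n i + N := by have := hn i hi hbi; omega
  rw [eval_mul, eval_C, eval_pow, eval_X, ← zpow_natCast, Int.toNat_of_nonneg hnN,
    zpow_add₀ (exp_ne_zero _), zpow_natCast, ← exp_int_mul]
  ring_nf

theorem trigSum.zeros_finite_and_ncard_le (hn : ∀ i ∈ S, b i ≠ 0 → (n i).natAbs ≤ N)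
    {c : ℝ} (hc : 0 < c) (hg : trigSum S b n c ≠ 0) :
    {t ∈ Ico 0 c | trigSum S b n c t = 0}.Finite ∧
      {t ∈ Ico 0 c | trigSum S b n c t = 0}.ncard ≤ 2 * N := by
  have hP : trigSum.toPolynomial S b n N ≠ 0 := by
    refine fun hP => hg (funext fun t => ?_)
    have := trigSum.eval_toPolynomial hn c t
    rw [hP, eval_zero, eq_comm, mul_eq_zero] at this
    exact this.resolve_left (pow_ne_zero _ (exp_ne_zero _))
  set P := trigSum.toPolynomial S b n N
  set Z := {t ∈ Ico 0 c | trigSum S b n c t = 0}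
  have hmaps : MapsTo (fun t : ℝ => exp (2 * π * I * t / c)) Z (P.rootSet ℂ) := by
    rintro t ⟨-, ht⟩
    rw [mem_rootSet, coe_aeval_eq_eval, trigSum.eval_toPolynomial hn, ht, mul_zero]
    exact ⟨hP, rfl⟩
  have hinj : InjOn _ Z := (injOn_exp_two_pi_I_mul_div hc).mono (sep_subset _ _)
  refine ⟨.of_injOn hmaps hinj (P.rootSet_finite ℂ), ?_⟩
  calc _ ≤ (P.rootSet ℂ).ncard := ncard_le_ncard_of_injOn _ hmaps hinj (P.rootSet_finite ℂ)
    _ ≤ P.natDegree := ncard_rootSet_le P ℂ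
    _ ≤ 2 * N := trigSum.natDegree_toPolynomial_le hn

end

theorem ncard_inter_Ico_eq_sum (Z : Set ℝ) (n : ℕ) (hZ : (Z ∩ Ico 0 n).Finite) :
    (Z ∩ Ico 0 n).ncard = ∑ r ∈ Finset.range n, (Z ∩ Ico r (r + 1)).ncard := by
  induction n with
  | zero => simp
  | succ n ih =>
    have hsplit : Z ∩ Ico 0 (n + 1 : ℕ) = (Z ∩ Ico 0 n) ∪ (Z ∩ Ico n (n + 1)) := by
      rw [← inter_union_distrib_left, Ico_union_Ico_eq_Ico (by positivity) (by linarith)]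
      push_cast; rfl
    have hle : Z ∩ Ico 0 n ⊆ Z ∩ Ico 0 (n + 1 : ℕ) := hsplit ▸ subset_union_left
    rw [hsplit, ncard_union_eq (Ico_disjoint_Ico_same.inter_left' Z |>.inter_right' Z)
      (hZ.subset hle) (hZ.subset (hsplit ▸ subset_union_right)), ih (hZ.subset hle),
      Finset.sum_range_succ]

theorem ncard_preimage_add_inter_Ico (Z : Set ℝ) (r : ℝ) :
    ((· + r) ⁻¹' Z ∩ Ico 0 1).ncard = (Z ∩ Ico r (r + 1)).ncard := by
  have hpre : (· + r) ⁻¹' Z ∩ Ico 0 1 = (· + r) ⁻¹' (Z ∩ Ico r (r + 1)) := by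
    rw [preimage_inter, preimage_add_const_Ico, sub_self, add_sub_cancel_left]
  rw [hpre, ncard_preimage_of_injective_subset_range (add_left_injective r)
    fun x _ => ⟨x - r, sub_add_cancel x r⟩]

theorem sum_ncard_zeros_shift_eq {M : Type*} [Zero M] {V : ℝ → ℝ → M}
    (hV : ∀ (m : ℤ) (x y : ℝ), V (x + m) y = V x y) (α s : ℝ) (n : ℕ) (hfin : {t ∈ Ico 0 (n : ℝ) | V t (s + t * α) = 0}.Finite) :
    ∑ r ∈ Finset.range n, ({u ∈ Ico 0 1 | V u (s + r * α + u * α) = 0}.ncard : ℝ) =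
      {t ∈ Ico 0 (n : ℝ) | V t (s + t * α) = 0}.ncard := by
  set Z := {t | V t (s + t * α) = 0}
  have hshift (r : ℕ) :
      {u ∈ Ico 0 1 | V u (s + r * α + u * α) = 0} = (· + (r : ℝ)) ⁻¹' Z ∩ Ico 0 1 := by
    ext u
    rw [mem_inter_iff, mem_preimage, and_comm, mem_ofPred_eq, mem_ofPred_eq, ← Int.cast_natCast r,
      ← hV r u, Int.cast_natCast, show s + r * α + u * α = s + (u + r) * α by ring]
  rw [show {t ∈ Ico 0 (n : ℝ) | V t (s + t * α) = 0} = Z ∩ Ico 0 n from inter_comm _ _,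
    ncard_inter_Ico_eq_sum Z n (by rwa [inter_comm]), Nat.cast_sum]
  simp only [hshift, ncard_preimage_add_inter_Ico]

theorem intervalIntegral_le_of_sum_shift_le {F : ℝ → ℝ} (hF : Periodic F 1) {B : ℝ} (hB : 0 ≤ B)
    {n : ℕ} (hn : 0 < n) (c : ℕ → ℝ) (h : ∀ s, ∑ r ∈ Finset.range n, F (s + c r) ≤ B) :
    ∫ s in (0 : ℝ)..1, F s ≤ B / n := by
  by_cases hint : IntervalIntegrable F MeasureTheory.volume 0 1
  swap
  -- the integral of a non-integrable function is `0`
  · rw [intervalIntegral.integral_undef hint]; positivity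
  have hshift (r : ℕ) : IntervalIntegrable (fun s => F (s + c r)) MeasureTheory.volume 0 1 := by
    have := (hF.intervalIntegrable₀ one_ne_zero hint (0 + c r) (1 + c r)).comp_add_right (c r)
    simpa using this
  have hshift_eq (r : ℕ) : ∫ s in (0 : ℝ)..1, F (s + c r) = ∫ s in (0 : ℝ)..1, F s := by
    rw [intervalIntegral.integral_comp_add_right, zero_add, add_comm]
    simpa using hF.intervalIntegral_add_eq (c r) 0
  have hsum : IntervalIntegrable (fun s => ∑ r ∈ Finset.range n, F (s + c r))
      MeasureTheory.volume 0 1 := by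
    simpa [Finset.sum_fn] using IntervalIntegrable.sum (Finset.range n) fun r _ => hshift r
  rw [le_div_iff₀ (by exact_mod_cast hn), mul_comm]
  calc (n : ℝ) * ∫ s in (0 : ℝ)..1, F s
      = ∫ s in (0 : ℝ)..1, ∑ r ∈ Finset.range n, F (s + c r) := by
        rw [intervalIntegral.integral_finsetSum fun r _ => hshift r]
        simp [hshift_eq]
    _ ≤ ∫ _ in (0 : ℝ)..1, B :=
        intervalIntegral.integral_mono_on zero_le_one hsum intervalIntegrable_const fun s _ => h s
    _ = B := by simp

theorem natAbs_mul_add_mul_le_floor {d : ℝ} (hd : 0 ≤ d) {j k : ℤ}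
    (hjk : (j : ℝ) ^ 2 + (k : ℝ) ^ 2 ≤ d ^ 2) (p q : ℤ) :
    (j * q + k * p).natAbs ≤ ⌊d * √((p : ℝ) ^ 2 + (q : ℝ) ^ 2)⌋₊ := by
  refine Nat.le_floor ?_
  rw [Nat.cast_natAbs, Int.cast_abs, ← Real.sqrt_sq hd, ← Real.sqrt_mul (sq_nonneg d)]
  refine abs_le_of_sq_le_sq ?_ (by positivity)
  rw [Real.sq_sqrt (by positivity)]
  push_cast
  nlinarith [sq_nonneg ((j : ℝ) * p - k * q), mul_le_mul_of_nonneg_right hjk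
    (by positivity : (0 : ℝ) ≤ (p : ℝ) ^ 2 + (q : ℝ) ^ 2)]

theorem support_subset_Icc_ceil {d : ℝ} (hd : 0 ≤ d) {a : ℤ × ℤ → ℂ}
    (ha : ∀ j k : ℤ, d ^ 2 < (j : ℝ) ^ 2 + (k : ℝ) ^ 2 → a (j, k) = 0) :
    support a ⊆ Finset.Icc (-⌈d⌉, -⌈d⌉) (⌈d⌉, ⌈d⌉) := by
  rintro ⟨j, k⟩ hjk
  have hjk : (j : ℝ) ^ 2 + (k : ℝ) ^ 2 ≤ d ^ 2 := not_lt.mp (mt (ha j k) hjk)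
  have hj : |(j : ℝ)| ≤ ⌈d⌉ := (abs_le_of_sq_le_sq (by nlinarith) hd).trans (Int.le_ceil d)
  have hk : |(k : ℝ)| ≤ ⌈d⌉ := (abs_le_of_sq_le_sq (by nlinarith) hd).trans (Int.le_ceil d)
  rw [← Int.cast_abs, Int.cast_le, abs_le] at hj hk
  simp only [Finset.coe_Icc, mem_Icc, Prod.mk_le_mk]
  omega

def trigSum₂ (S : Finset (ℤ × ℤ)) (a : ℤ × ℤ → ℂ) (x y : ℝ) : ℂ :=
  ∑ jk ∈ S, a jk * exp (2 * π * I * (jk.1 * x + jk.2 * y))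

section
variable (S : Finset (ℤ × ℤ)) (a : ℤ × ℤ → ℂ)

theorem finsum_eq_trigSum₂ (hS : support a ⊆ S) (x y : ℝ) :
    ∑ᶠ jk : ℤ × ℤ, a jk * exp (2 * π * I * (jk.1 * x + jk.2 * y)) = trigSum₂ S a x y :=
  finsum_eq_finsetSum_of_support_subset _ fun _ hjk => hS (left_ne_zero_of_mul hjk)

theorem trigSum₂_add_int_left (m : ℤ) (x y : ℝ) : trigSum₂ S a (x + m) y = trigSum₂ S a x y := by
  refine Finset.sum_congr rfl fun jk _ => ?_
  rw [show 2 * π * I * (jk.1 * ((x + m : ℝ) : ℂ) + jk.2 * y) =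
      2 * π * I * (jk.1 * x + jk.2 * y) + (jk.1 * m : ℤ) * (2 * π * I) by push_cast; ring,
    exp_add, exp_int_mul_two_pi_mul_I, mul_one]

theorem trigSum₂_add_int_right (m : ℤ) (x y : ℝ) : trigSum₂ S a x (y + m) = trigSum₂ S a x y := by
  refine Finset.sum_congr rfl fun jk _ => ?_
  rw [show 2 * π * I * (jk.1 * x + jk.2 * ((y + m : ℝ) : ℂ)) =
      2 * π * I * (jk.1 * x + jk.2 * y) + (jk.2 * m : ℤ) * (2 * π * I) by push_cast; ring,
    exp_add, exp_int_mul_two_pi_mul_I, mul_one]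

theorem trigSum₂_line (p : ℤ) {q : ℤ} (hq : q ≠ 0) (s : ℝ) :
    (fun t => trigSum₂ S a t (s + t * (p / q))) =
      trigSum S (fun jk => a jk * exp (2 * π * I * jk.2 * s))
        (fun jk => jk.1 * q + jk.2 * p) q := by
  ext t
  refine Finset.sum_congr rfl fun jk _ => ?_
  have hq' : (q : ℂ) ≠ 0 := by exact_mod_cast hq
  dsimp only
  rw [mul_assoc (a jk), ← exp_add]
  congr 2
  push_cast
  field_simp
  ring

theorem trigSum₂_line_ne_zero {α : ℝ}
    (h : ∀ s : ℝ, 0 ≤ s → s < 1 → (fun t => trigSum₂ S a t (s + t * α)) ≠ 0) (s : ℝ) :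
    (fun t => trigSum₂ S a t (s + t * α)) ≠ 0 := by
  have hfract (t : ℝ) : trigSum₂ S a t (s + t * α) = trigSum₂ S a t (Int.fract s + t * α) := by
    nth_rw 1 [← Int.fract_add_floor s]
    rw [add_right_comm, trigSum₂_add_int_right]
  simpa only [hfract] using h _ (Int.fract_nonneg s) (Int.fract_lt_one s)

theorem periodic_ncard_zeros_trigSum₂_line (α : ℝ) :
    Periodic (fun s => ({t ∈ Ico 0 1 | trigSum₂ S a t (s + t * α) = 0}.ncard : ℝ)) 1 := by
  intro s
  have := trigSum₂_add_int_right S a 1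
  simp only [Int.cast_one] at this
  simp only [add_right_comm s 1, this]

variable {S a}

theorem sum_ncard_zeros_trigSum₂_line_le {d : ℝ} (hd : 0 ≤ d)
    (ha : ∀ j k : ℤ, d ^ 2 < (j : ℝ) ^ 2 + (k : ℝ) ^ 2 → a (j, k) = 0)
    (p : ℤ) {q : ℕ} (hq : 0 < q) (s : ℝ) (hne : (fun t => trigSum₂ S a t (s + t * (p / q))) ≠ 0) :
    ∑ r ∈ Finset.range q,
      ({t ∈ Ico 0 1 | trigSum₂ S a t (s + r * (p / q) + t * (p / q)) = 0}.ncard : ℝ) ≤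
        2 * d * √((p : ℝ) ^ 2 + (q : ℝ) ^ 2) := by
  have hline := trigSum₂_line S a p (Int.natCast_ne_zero.mpr hq.ne') s
  simp only [Int.cast_natCast] at hline
  have hfreq (jk) (_ : jk ∈ S) (h : a jk * exp (2 * π * I * jk.2 * s) ≠ 0) :
      (jk.1 * q + jk.2 * p).natAbs ≤ ⌊d * √((p : ℝ) ^ 2 + (q : ℝ) ^ 2)⌋₊ := by
    simpa using natAbs_mul_add_mul_le_floor hd (not_lt.mp (mt (ha _ _) (left_ne_zero_of_mul h))) p q
  obtain ⟨hfin, hcard⟩ :=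
    trigSum.zeros_finite_and_ncard_le hfreq (Nat.cast_pos.mpr hq) (hline ▸ hne)
  simp only [← hline] at hfin hcard
  rw [sum_ncard_zeros_shift_eq (trigSum₂_add_int_left S a) _ _ _ hfin]
  calc _ ≤ (2 * ⌊d * √((p : ℝ) ^ 2 + (q : ℝ) ^ 2)⌋₊ : ℝ) := by exact_mod_cast hcard
    _ ≤ _ := by
      rw [mul_assoc]
      exact mul_le_mul_of_nonneg_left (Nat.floor_le (by positivity)) zero_le_two

end

end

theorem stmt_10_general (d : ℝ) (hd : 0 < d) (a : ℤ × ℤ → ℂ)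
    (hsupp : ∀ j k : ℤ, d ^ 2 < (j : ℝ) ^ 2 + (k : ℝ) ^ 2 → a (j, k) = 0)
    (V : ℝ → ℝ → ℂ)
    (hV : V = fun x y : ℝ => ∑ᶠ jk : ℤ × ℤ, a jk *
        Complex.exp (2 * Real.pi * Complex.I * ((jk.1 : ℂ) * (x : ℂ) + (jk.2 : ℂ) * (y : ℂ))))
    (p q : ℤ) (hq : 1 ≤ q)
    (hnz : ∀ s : ℝ, 0 ≤ s → s < 1 →
      (fun t : ℝ => V t (s + t * ((p : ℝ) / (q : ℝ)))) ≠ 0) :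
    (∫ s in (0 : ℝ)..1,
        (({t : ℝ | t ∈ Set.Ico (0 : ℝ) 1 ∧ V t (s + t * ((p : ℝ) / (q : ℝ))) = 0}.ncard : ℝ))) ≤
      2 * d * Real.sqrt ((p : ℝ) ^ 2 + (q : ℝ) ^ 2) / (q : ℝ) := by
  set S := Finset.Icc (-⌈d⌉, -⌈d⌉) (⌈d⌉, ⌈d⌉)
  obtain rfl : V = trigSum₂ S a :=
    hV ▸ funext₂ (finsum_eq_trigSum₂ S a (support_subset_Icc_ceil hd.le hsupp))
  lift q to ℕ using (by omega)
  push_cast at hnz ⊢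
  exact intervalIntegral_le_of_sum_shift_le (periodic_ncard_zeros_trigSum₂_line S a _)
    (by positivity) (by omega) (fun r => r * (p / q)) fun s =>
      sum_ncard_zeros_trigSum₂_line_le hd.le hsupp p (by omega) s (trigSum₂_line_ne_zero S a hnz s)

/-- Theorem (average directional number of zero-crossings): for a real band-limited
trigonometric polynomial `v` on `𝕋²` with spectrum in the disk of radius `d`, the
average number of zeros of `v` along the lines of rational slope `p/q` is at most
`2 d √(p² + q²) / q`; equivalently `K_θ ≤ 2d` where `cos θ = q / √(p² + q²)`. -/
theorem stmt_10 (d : ℝ) (hd : 0 < d) (a : ℤ × ℤ → ℂ)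
    (hsupp : ∀ j k : ℤ, d ^ 2 < (j : ℝ) ^ 2 + (k : ℝ) ^ 2 → a (j, k) = 0)
    (hsym : ∀ j k : ℤ, a (-j, -k) = starRingEnd ℂ (a (j, k)))
    (V : ℝ → ℝ → ℂ)
    (hV : V = fun x y : ℝ => ∑ᶠ jk : ℤ × ℤ, a jk *
        Complex.exp (2 * Real.pi * Complex.I * ((jk.1 : ℂ) * (x : ℂ) + (jk.2 : ℂ) * (y : ℂ))))
    (p q : ℤ) (hq : 1 ≤ q) (hcop : Int.gcd p q = 1)
    (hnz : ∀ s : ℝ, 0 ≤ s → s < 1 →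
      (fun t : ℝ => V t (s + t * ((p : ℝ) / (q : ℝ)))) ≠ 0) :
    (∫ s in (0 : ℝ)..1,
        (({t : ℝ | t ∈ Set.Ico (0 : ℝ) 1 ∧ V t (s + t * ((p : ℝ) / (q : ℝ))) = 0}.ncard : ℝ))) ≤
      2 * d * Real.sqrt ((p : ℝ) ^ 2 + (q : ℝ) ^ 2) / (q : ℝ) :=
  stmt_10_general d hd a hsupp V hV p q hq hnz
end

section
/- Let m ≥ 1 and let S ⊂ ℤ^m be a finite set with 0 ∉ S and S = −S. Let c : S → ℂ satisfy c(−k) = conj(c(k)) for all k ∈ S, so that v(x) = Σ_{k∈S} c(k)·e^{2πi⟨k,x⟩} defines a real-valued ℤ^m-periodic function on ℝ^m. Then for every x0 ∈ ℝ^m there exists x ∈ ℝ^m with ‖x − x0‖ ≤ (1/2)·Σ_{k∈S} 1/(4‖k‖) and v(x) = 0; that is, v has at least one zero in every closed ball of diameter Σ_{k∈S} 1/(4‖k‖). -/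
/-!
Averaging over a quarter-period shift kills one pair of frequencies. For `k ∈ S` put
`a = φ k / (4‖φ k‖²)`; then `v (x + a) + v (x - a)` is again a real trigonometric polynomial, with
coefficients `2 cos (2π⟪φ j, a⟫) c j`, and these vanish at `j = ±k`. By induction it has a zero `x₁`
within the smaller radius. At `x₁` the real numbers `v (x₁ + a)` and `v (x₁ - a)` have opposite
signs, so `v` vanishes on the segment between them, within `‖a‖ = 1 / (4‖φ k‖)` of `x₁`.
-/

open Complex Finset Metric
open scoped InnerProductSpace ComplexConjugate

lemma Finset.neg_mem_erase_erase_neg_iff {α : Type*} [InvolutiveNeg α] [DecidableEq α]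
    {S : Finset α} (hS : ∀ j, j ∈ S ↔ -j ∈ S) (k j : α) :
    -j ∈ (S.erase k).erase (-k) ↔ j ∈ (S.erase k).erase (-k) := by
  simp only [mem_erase, ne_eq, neg_eq_iff_eq_neg, neg_neg, ← hS j]
  tauto

lemma inner_inv_four_mul_norm_sq_smul_self {E : Type*} [NormedAddCommGroup E]
    [InnerProductSpace ℝ E] {ξ : E} (hξ : ξ ≠ 0) : ⟪ξ, (4 * ‖ξ‖ ^ 2)⁻¹ • ξ⟫_ℝ = 1 / 4 := by
  rw [real_inner_smul_right, real_inner_self_eq_norm_sq]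
  field_simp [norm_ne_zero_iff.mpr hξ]

section

variable {ι E : Type*} [AddCommGroup ι] [NormedAddCommGroup E] [InnerProductSpace ℝ E]

/-- Frequencies are indexed by a group `ι` through `φ`, so that a spectrum in `ℤ^m` keeps its
indexing when embedded in `ℝ^m`. -/
noncomputable def trigPoly (φ : ι →+ E) (S : Finset ι) (c : ι → ℂ) (x : E) : ℂ :=
  ∑ k ∈ S, c k * exp (2 * Real.pi * I * (⟪φ k, x⟫_ℝ : ℂ))

variable {φ : ι →+ E} {S : Finset ι} {c : ι → ℂ}

lemma continuous_trigPoly : Continuous (trigPoly φ S c) := by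
  unfold trigPoly; fun_prop

lemma conj_trigPoly (hsym : ∀ k, k ∈ S ↔ -k ∈ S) (hc : ∀ k ∈ S, c (-k) = conj (c k)) (x : E) :
    conj (trigPoly φ S c x) = trigPoly φ S c x := by
  rw [trigPoly, map_sum]
  refine sum_equiv (Equiv.neg ι) hsym fun k hk => ?_
  rw [map_mul, ← exp_conj, Equiv.neg_apply, hc k hk, map_neg, inner_neg_left]
  simp only [map_mul, conj_ofReal, conj_I, map_ofNat]
  push_cast
  ring_nf

lemma trigPoly_erase [DecidableEq ι] {k : ι} (hk : c k = 0) :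
    trigPoly φ (S.erase k) c = trigPoly φ S c := by
  ext x
  exact sum_erase _ (by simp [hk])

noncomputable def avgCoeff (φ : ι →+ E) (a : E) (c : ι → ℂ) (j : ι) : ℂ :=
  (2 * Real.cos (2 * Real.pi * ⟪φ j, a⟫_ℝ) : ℝ) * c j

lemma trigPoly_add_add_trigPoly_sub (x a : E) :
    trigPoly φ S c (x + a) + trigPoly φ S c (x - a) = trigPoly φ S (avgCoeff φ a c) x := by
  simp only [trigPoly, avgCoeff, ← sum_add_distrib, inner_add_right, inner_sub_right]
  refine sum_congr rfl fun k _ => ?_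
  push_cast
  rw [two_cos]
  set θ : ℂ := ((⟪φ k, x⟫_ℝ : ℝ) : ℂ)
  set t : ℂ := ((⟪φ k, a⟫_ℝ : ℝ) : ℂ)
  rw [show 2 * Real.pi * I * (θ + t) = 2 * Real.pi * t * I + 2 * Real.pi * I * θ by ring,
    show 2 * Real.pi * I * (θ - t) = -(2 * Real.pi * t) * I + 2 * Real.pi * I * θ by ring,
    exp_add, exp_add]
  ring

lemma avgCoeff_neg {a : E} {j : ι} (hc : c (-j) = conj (c j)) :
    avgCoeff φ a c (-j) = conj (avgCoeff φ a c j) := by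
  simp only [avgCoeff, map_neg, inner_neg_left, mul_neg, Real.cos_neg, hc, map_mul, conj_ofReal]

lemma avgCoeff_self_eq_zero {k : ι} (hk : φ k ≠ 0) :
    avgCoeff φ ((4 * ‖φ k‖ ^ 2)⁻¹ • φ k) c k = 0 := by
  have hcos : Real.cos (2 * Real.pi * (1 / 4)) = 0 := by
    rw [← Real.cos_pi_div_two]
    ring_nf
  simp only [avgCoeff, inner_inv_four_mul_norm_sq_smul_self hk, hcos, mul_zero, ofReal_zero,
    zero_mul]

end

lemma norm_inv_four_mul_norm_sq_smul_self {E : Type*} [NormedAddCommGroup E]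
    [NormedSpace ℝ E] (ξ : E) : ‖(4 * ‖ξ‖ ^ 2)⁻¹ • ξ‖ = 1 / (4 * ‖ξ‖) := by
  rw [norm_smul, norm_inv, Real.norm_of_nonneg (by positivity)]
  rcases eq_or_ne ‖ξ‖ 0 with h | h
  · simp [h]
  · field_simp

lemma exists_mem_closedBall_eq_zero_of_add_eq_zero {E : Type*} [NormedAddCommGroup E]
    [NormedSpace ℝ E] {g : E → ℝ} (hg : Continuous g) {x a : E}
    (h : g (x + a) + g (x - a) = 0) : ∃ y ∈ closedBall x ‖a‖, g y = 0 := by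
  have hseg : segment ℝ (x - a) (x + a) ⊆ closedBall x ‖a‖ :=
    (convex_closedBall x ‖a‖).segment_subset (by simp) (by simp)
  have hpre := (convex_segment (x - a) (x + a)).isPreconnected
  have hl := left_mem_segment ℝ (x - a) (x + a)
  have hr := right_mem_segment ℝ (x - a) (x + a)
  obtain ⟨y, hy, hgy⟩ : ∃ y ∈ segment ℝ (x - a) (x + a), g y = 0 := by
    rcases le_total (g (x + a)) 0 with hneg | hpos
    · exact hpre.intermediate_value₂ hr hl hg.continuousOn continuousOn_const hneg (by linarith)
    · exact hpre.intermediate_value₂ hl hr hg.continuousOn continuousOn_const (by linarith) hpos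
  exact ⟨y, hseg hy, hgy⟩

theorem exists_dist_le_trigPoly_eq_zero {ι E : Type*} [AddCommGroup ι] [NormedAddCommGroup E]
    [InnerProductSpace ℝ E] (φ : ι →+ E) (S : Finset ι) (hS0 : ∀ k ∈ S, φ k ≠ 0)
    (hsym : ∀ k, k ∈ S ↔ -k ∈ S) (c : ι → ℂ) (hc : ∀ k ∈ S, c (-k) = conj (c k)) (x₀ : E) :
    ∃ x, dist x x₀ ≤ 1 / 2 * ∑ k ∈ S, 1 / (4 * ‖φ k‖) ∧ trigPoly φ S c x = 0 := by
  classical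
  induction S using Finset.strongInduction generalizing c x₀ with
  | H S ih =>
  rcases S.eq_empty_or_nonempty with rfl | ⟨k, hk⟩
  · exact ⟨x₀, by simp, by simp [trigPoly]⟩
  have hξ := hS0 k hk
  set a := (4 * ‖φ k‖ ^ 2)⁻¹ • φ k
  have hcoeff_k : avgCoeff φ a c k = 0 := avgCoeff_self_eq_zero hξ
  have hcoeff_neg_k : avgCoeff φ a c (-k) = 0 := by rw [avgCoeff_neg (hc k hk), hcoeff_k, map_zero]
  have hnk : -k ≠ k := fun h => hξ <| by
    simpa [neg_eq_iff_add_eq_zero, ← two_smul ℝ] using congrArg φ h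
  set S' := (S.erase k).erase (-k)
  have hS'S : S' ⊂ S := (erase_subset _ _).trans_ssubset (erase_ssubset hk)
  obtain ⟨x₁, hx₁, hz⟩ := ih S' hS'S (fun j hj => hS0 j (hS'S.subset hj))
    (fun j => (neg_mem_erase_erase_neg_iff hsym k j).symm) (avgCoeff φ a c)
    (fun j hj => avgCoeff_neg (hc j (hS'S.subset hj))) x₀
  rw [trigPoly_erase hcoeff_neg_k, trigPoly_erase hcoeff_k] at hz
  have hsum : (trigPoly φ S c (x₁ + a)).re + (trigPoly φ S c (x₁ - a)).re = 0 := by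
    rw [← add_re, trigPoly_add_add_trigPoly_sub, hz, zero_re]
  obtain ⟨y, hy, hzy⟩ :=
    exists_mem_closedBall_eq_zero_of_add_eq_zero (continuous_re.comp continuous_trigPoly) hsum
  refine ⟨y, ?_, ?_⟩
  · have hsplit :
        ∑ j ∈ S, 1 / (4 * ‖φ j‖) = ∑ j ∈ S', 1 / (4 * ‖φ j‖) + 2 * (1 / (4 * ‖φ k‖)) := by
      rw [← sum_erase_add S _ hk, ← sum_erase_add (S.erase k) _ (mem_erase.2 ⟨hnk, (hsym k).1 hk⟩)]
      simp only [map_neg, norm_neg]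
      ring
    rw [mem_closedBall, norm_inv_four_mul_norm_sq_smul_self] at hy
    linarith [dist_triangle y x₁ x₀]
  · rw [← conj_eq_iff_re.mp (conj_trigPoly hsym hc y), show (trigPoly φ S c y).re = 0 from hzy,
      ofReal_zero]

noncomputable def intVecToEuclidean (m : ℕ) : (Fin m → ℤ) →+ EuclideanSpace ℝ (Fin m) :=
  AddMonoidHom.mk' (fun k => WithLp.toLp 2 fun i => (k i : ℝ)) fun a b => by ext i; simp

lemma intVecToEuclidean_injective (m : ℕ) : Function.Injective (intVecToEuclidean m) :=
  fun a b h => funext fun i => by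
    simpa [intVecToEuclidean] using congrArg (· i) h

lemma inner_intVecToEuclidean {m : ℕ} (k : Fin m → ℤ) (x : EuclideanSpace ℝ (Fin m)) :
    ⟪intVecToEuclidean m k, x⟫_ℝ = ∑ i, (k i : ℝ) * x i := by
  simp [intVecToEuclidean, PiLp.inner_apply, mul_comm]

lemma norm_intVecToEuclidean {m : ℕ} (k : Fin m → ℤ) :
    ‖intVecToEuclidean m k‖ = √(∑ i, (k i : ℝ) ^ 2) := by
  simp [intVecToEuclidean, EuclideanSpace.norm_eq]

theorem stmt_11_general (m : ℕ) (S : Finset (Fin m → ℤ))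
    (h0 : (0 : Fin m → ℤ) ∉ S) (hsym : ∀ k, k ∈ S ↔ -k ∈ S)
    (c : (Fin m → ℤ) → ℂ) (hc : ∀ k ∈ S, c (-k) = starRingEnd ℂ (c k))
    (v : (Fin m → ℝ) → ℂ)
    (hv : v = fun x : Fin m → ℝ => ∑ k ∈ S, c k *
        Complex.exp (2 * Real.pi * Complex.I * ((∑ i, (k i : ℝ) * x i : ℝ) : ℂ)))
    (x0 : Fin m → ℝ) :
    ∃ x : Fin m → ℝ,
      Real.sqrt (∑ i, (x i - x0 i) ^ 2) ≤
        (1 / 2) * ∑ k ∈ S, 1 / (4 * Real.sqrt (∑ i, (k i : ℝ) ^ 2)) ∧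
      v x = 0 := by
  have hS0 : ∀ k ∈ S, intVecToEuclidean m k ≠ 0 := fun k hk h =>
    h0 (intVecToEuclidean_injective m (h.trans (map_zero _).symm) ▸ hk)
  obtain ⟨x, hdist, hzero⟩ :=
    exists_dist_le_trigPoly_eq_zero _ S hS0 hsym c hc (WithLp.toLp 2 x0)
  refine ⟨x.ofLp, ?_, ?_⟩
  · simpa [EuclideanSpace.dist_eq, Real.dist_eq, sq_abs, norm_intVecToEuclidean] using hdist
  · simpa [hv, trigPoly, inner_intVecToEuclidean] using hzero

/-- Theorem (Kozma–Oravecz): a real trigonometric polynomial on `𝕋^m` with finite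
symmetric spectrum `S` not containing `0` has a zero in every closed ball of diameter
`∑_{k ∈ S} 1/(4‖k‖)`. -/
theorem stmt_11 (m : ℕ) (hm : 1 ≤ m) (S : Finset (Fin m → ℤ))
    (h0 : (0 : Fin m → ℤ) ∉ S) (hsym : ∀ k, k ∈ S ↔ -k ∈ S)
    (c : (Fin m → ℤ) → ℂ) (hc : ∀ k ∈ S, c (-k) = starRingEnd ℂ (c k))
    (v : (Fin m → ℝ) → ℂ)
    (hv : v = fun x : Fin m → ℝ => ∑ k ∈ S, c k *
        Complex.exp (2 * Real.pi * Complex.I * ((∑ i, (k i : ℝ) * x i : ℝ) : ℂ)))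
    (x0 : Fin m → ℝ) :
    ∃ x : Fin m → ℝ,
      Real.sqrt (∑ i, (x i - x0 i) ^ 2) ≤
        (1 / 2) * ∑ k ∈ S, 1 / (4 * Real.sqrt (∑ i, (k i : ℝ) ^ 2)) ∧
      v x = 0 :=
  stmt_11_general m S h0 hsym c hc v hv x0
end

section
/- (Orthant-counting lemma.) Let 1 ≤ r ≤ N and let V be an r-dimensional linear subspace of ℝ^N that is in general position, meaning that for every set s of r coordinates the restriction map V → ℝ^s, v ↦ (v(i))_{i∈s}, is injective. Then the number of sign vectors ε ∈ {−1,+1}^N for which there exists v ∈ V with ε(i)·v(i) > 0 for every i equals 2·Σ_{i=0}^{r−1} C(N−1, i), where C(·,·) is the binomial coefficient. In other words, V passes through the interiors of exactly 2·Σ_{i=0}^{r−1} C(N−1, i) of the 2^N open orthants of ℝ^N. -/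
/-!
Deletion–contraction in the last coordinate. Restricting sign patterns of `V ⊆ ℝ^(n+1)` to the
first `n` coordinates maps them onto the sign patterns of the projection `V'` of `V`; a pattern of
`V'` has both lifts exactly when it is a pattern of the projection `V''` of `V ∩ {x_last = 0}`:
two lifts of opposite last sign combine positively to a vector with last coordinate `0`, and
conversely a small push in a direction of `V` with nonzero last coordinate realizes either sign.
So the count `c(V)` equals `c(V') + c(V'')`. General position passes to `V'` (dimension `r`) and to
`V''` (dimension `r - 1`), so `c` satisfies Pascal's recursion, with `c = 2^N` when `r = N`.
-/

open Finset Module Filter Topology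

section Orthant

variable {ι : Type*}

def boolSign (b : Bool) : ℝ := if b then 1 else -1

@[simp] lemma boolSign_true : boolSign true = 1 := rfl

@[simp] lemma boolSign_false : boolSign false = -1 := rfl

lemma boolSign_mul_self (b : Bool) : boolSign b * boolSign b = 1 := by
  cases b <;> norm_num

lemma exists_boolSign_mul_pos {a : ℝ} (ha : a ≠ 0) : ∃ b, 0 < boolSign b * a := by
  rcases ha.lt_or_gt with ha | ha
  · exact ⟨false, by simpa using ha⟩
  · exact ⟨true, by simpa using ha⟩

def orthant (ε : ι → Bool) : Set (ι → ℝ) := {x | ∀ i, 0 < boolSign (ε i) * x i}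

def signPatterns (V : Submodule ℝ (ι → ℝ)) : Set (ι → Bool) := {ε | ∃ v ∈ V, v ∈ orthant ε}

lemma isOpen_orthant [Finite ι] (ε : ι → Bool) : IsOpen (orthant ε) := by
  simp only [orthant, Set.ofPred_forall]
  exact isOpen_iInter_of_finite fun i ↦
    isOpen_lt continuous_const (continuous_const.mul (continuous_apply i))

lemma smul_add_smul_mem_orthant {ε : ι → Bool} {x y : ι → ℝ} (hx : x ∈ orthant ε)
    (hy : y ∈ orthant ε) {a b : ℝ} (ha : 0 < a) (hb : 0 < b) : a • x + b • y ∈ orthant ε := by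
  intro i
  have h : boolSign (ε i) * (a * x i + b * y i) =
      a * (boolSign (ε i) * x i) + b * (boolSign (ε i) * y i) := by ring
  simpa [h] using add_pos (mul_pos ha (hx i)) (mul_pos hb (hy i))

lemma exists_pos_add_smul_mem_orthant [Finite ι] {ε : ι → Bool} {x : ι → ℝ}
    (hx : x ∈ orthant ε) (u : ι → ℝ) : ∃ t : ℝ, 0 < t ∧ x + t • u ∈ orthant ε := by
  have hnear : ∀ᶠ t in 𝓝 (0 : ℝ), x + t • u ∈ orthant ε :=
    (by fun_prop : Continuous fun t : ℝ ↦ x + t • u).continuousAt.eventually_mem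
      (by simpa using (isOpen_orthant ε).mem_nhds hx)
  obtain ⟨t, ht, htpos⟩ :=
    ((hnear.filter_mono nhdsWithin_le_nhds).and (eventually_mem_nhdsWithin (s := Set.Ioi 0))).exists
  exact ⟨t, htpos, ht⟩

lemma signPatterns_bot [Nonempty ι] : signPatterns (⊥ : Submodule ℝ (ι → ℝ)) = ∅ := by
  refine Set.eq_empty_of_forall_notMem fun ε ⟨v, hv, hvε⟩ ↦ ?_
  rw [Submodule.mem_bot] at hv
  simpa [hv] using hvε (Classical.arbitrary ι)

lemma signPatterns_top : signPatterns (⊤ : Submodule ℝ (ι → ℝ)) = Set.univ :=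
  Set.eq_univ_of_forall fun ε ↦
    ⟨fun i ↦ boolSign (ε i), Submodule.mem_top, fun i ↦ by simp [boolSign_mul_self]⟩

lemma exists_mem_boolSign_mul_pos {V : Submodule ℝ (ι → ℝ)} {i : ι} (hV : ∃ u ∈ V, u i ≠ 0)
    (b : Bool) : ∃ u ∈ V, 0 < boolSign b * u i := by
  obtain ⟨u, hu, hui⟩ := hV
  refine ⟨(boolSign b * u i) • u, V.smul_mem _ hu, ?_⟩
  have h : boolSign b * ((boolSign b * u i) * u i) = (boolSign b * boolSign b) * (u i * u i) := by
    ring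
  simpa [h, boolSign_mul_self] using mul_self_pos.2 hui

end Orthant

section GeneralPosition

variable {ι : Type*} {V : Submodule ℝ (ι → ℝ)} {r : ℕ}

def IsGeneralPosition (V : Submodule ℝ (ι → ℝ)) (r : ℕ) : Prop :=
  ∀ s : Finset ι, s.card = r → ∀ v ∈ V, (∀ i ∈ s, v i = 0) → v = 0

lemma isGeneralPosition_of_injective
    (h : ∀ s : Finset ι, s.card = r → Function.Injective fun v : V ↦ fun i : s ↦ (v : ι → ℝ) i) :
    IsGeneralPosition V r := fun s hs v hv hvs ↦ by
  simpa using h s hs (a₁ := ⟨v, hv⟩) (a₂ := 0) (funext fun i ↦ hvs i i.2)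

namespace IsGeneralPosition

lemma eq_zero_of_le_card (hV : IsGeneralPosition V r) {s : Finset ι} (hs : r ≤ s.card)
    {v : ι → ℝ} (hv : v ∈ V) (hvs : ∀ i ∈ s, v i = 0) : v = 0 := by
  obtain ⟨t, hts, ht⟩ := Finset.exists_subset_card_eq hs
  exact hV t ht v hv fun i hi ↦ hvs i (hts hi)

lemma finrank_le [Fintype ι] (hV : IsGeneralPosition V r) (hr : r ≤ Fintype.card ι) :
    finrank ℝ V ≤ r := by
  obtain ⟨s, -, hs⟩ := Finset.exists_subset_card_eq (s := univ) (by simpa using hr)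
  let restrict : V →ₗ[ℝ] (s → ℝ) := (LinearMap.funLeft ℝ ℝ Subtype.val).comp V.subtype
  have : Function.Injective restrict := by
    refine (injective_iff_map_eq_zero restrict).2 fun v hv ↦ Subtype.ext ?_
    exact hV s hs v v.2 fun i hi ↦ congrFun hv ⟨i, hi⟩
  simpa [hs] using LinearMap.finrank_le_finrank_of_injective this

end IsGeneralPosition

end GeneralPosition

lemma Submodule.finrank_map_of_disjoint_ker {K M M' : Type*} [DivisionRing K] [AddCommGroup M]
    [Module K M] [AddCommGroup M'] [Module K M'] (f : M →ₗ[K] M') {p : Submodule K M}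
    (h : Disjoint p (LinearMap.ker f)) : finrank K (p.map f) = finrank K p := by
  rw [← LinearMap.range_domRestrict]
  refine LinearMap.finrank_range_of_inj ((injective_iff_map_eq_zero _).2 fun v hv ↦ ?_)
  exact Subtype.ext (LinearMap.disjoint_ker.1 h v v.2 hv)

lemma sum_range_choose_succ (m r : ℕ) :
    ∑ i ∈ range (r + 1), (m + 1).choose i =
      ∑ i ∈ range (r + 1), m.choose i + ∑ i ∈ range r, m.choose i := by
  induction r with
  | zero => simp
  | succ r ih =>
    rw [sum_range_succ, ih, Nat.choose_succ_succ', sum_range_succ _ (r + 1), sum_range_succ _ r]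
    ring

lemma Nat.card_eq_sum_ite {α : Type*} [Fintype α] (s : Set α) [DecidablePred (· ∈ s)] :
    Nat.card s = ∑ a, if a ∈ s then 1 else 0 := by
  rw [Nat.card_eq_fintype_card, Fintype.card_subtype, card_filter]

lemma sum_bool_ite (p : Bool → Prop) [DecidablePred p] :
    (∑ b, if p b then 1 else 0 : ℕ) =
      (if ∃ b, p b then 1 else 0) + (if ∀ b, p b then 1 else 0) := by
  rw [Fintype.sum_bool]
  by_cases h₀ : p false <;> by_cases h₁ : p true <;>
    simp [h₀, h₁, Bool.exists_bool, Bool.forall_bool]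

section LastCoordinate

variable {n r : ℕ} {V : Submodule ℝ (Fin (n + 1) → ℝ)}

def initₗ (n : ℕ) : (Fin (n + 1) → ℝ) →ₗ[ℝ] (Fin n → ℝ) := LinearMap.funLeft ℝ ℝ Fin.castSucc

@[simp] lemma initₗ_apply (x : Fin (n + 1) → ℝ) : initₗ n x = Fin.init x := rfl

def deleteLast (V : Submodule ℝ (Fin (n + 1) → ℝ)) : Submodule ℝ (Fin n → ℝ) :=
  V.map (initₗ n)

def contractLast (V : Submodule ℝ (Fin (n + 1) → ℝ)) : Submodule ℝ (Fin n → ℝ) :=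
  (V ⊓ LinearMap.ker (LinearMap.proj (Fin.last n))).map (initₗ n)

lemma mem_contractLast {y : Fin n → ℝ} :
    y ∈ contractLast V ↔ ∃ x ∈ V, x (Fin.last n) = 0 ∧ Fin.init x = y := by
  simp [contractLast, and_assoc]

lemma mem_orthant_snoc {ε : Fin n → Bool} {b : Bool} {x : Fin (n + 1) → ℝ} :
    x ∈ orthant (Fin.snoc ε b : Fin (n + 1) → Bool) ↔
      Fin.init x ∈ orthant ε ∧ 0 < boolSign b * x (Fin.last n) := by
  simp [orthant, Fin.forall_fin_succ', Fin.init]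

namespace IsGeneralPosition

lemma disjoint_ker_initₗ (hV : IsGeneralPosition V r) (hr : r ≤ n) :
    Disjoint V (LinearMap.ker (initₗ n)) := by
  refine LinearMap.disjoint_ker.2 fun x hx hx0 ↦
    hV.eq_zero_of_le_card (s := univ.map Fin.castSuccEmb) (by simpa using hr) hx ?_
  simpa [Fin.init] using fun i ↦ congrFun hx0 i

lemma deleteLast (hV : IsGeneralPosition V r) : IsGeneralPosition (deleteLast V) r := by
  rintro s hs _ ⟨x, hx, rfl⟩ hxs
  have : x = 0 :=
    hV (s.map Fin.castSuccEmb) (by simpa using hs) x hx (by simpa [Fin.init] using hxs)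
  rw [this]
  rfl

lemma contractLast (hV : IsGeneralPosition V (r + 1)) : IsGeneralPosition (contractLast V) r := by
  intro s hs y hy hys
  obtain ⟨x, hx, hxl, rfl⟩ := mem_contractLast.1 hy
  have hlast : Fin.last n ∉ s.map Fin.castSuccEmb := by simp
  have : x = 0 := by
    refine hV (insert (Fin.last n) (s.map Fin.castSuccEmb)) (by simp [hlast, hs]) x hx ?_
    simpa [hxl, Fin.init] using hys
  rw [this]
  rfl

lemma finrank_deleteLast (hV : IsGeneralPosition V r) (hr : r ≤ n) :
    finrank ℝ (_root_.deleteLast V) = finrank ℝ V :=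
  Submodule.finrank_map_of_disjoint_ker _ (hV.disjoint_ker_initₗ hr)

lemma exists_mem_last_ne_zero (hV : IsGeneralPosition V (r + 1)) (hr : r + 1 ≤ n)
    (hdim : finrank ℝ V = r + 1) : ∃ u ∈ V, u (Fin.last n) ≠ 0 := by
  by_contra! hlast
  have hsame : _root_.contractLast V = _root_.deleteLast V := by
    rw [_root_.contractLast, inf_eq_left.2 fun x hx ↦ hlast x hx, _root_.deleteLast]
  have := hV.contractLast.finrank_le (by simpa using (Nat.le_succ r).trans hr)
  rw [hsame, hV.finrank_deleteLast hr, hdim] at this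
  omega

lemma finrank_contractLast (hV : IsGeneralPosition V (r + 1)) (hr : r + 1 ≤ n)
    (hdim : finrank ℝ V = r + 1) : finrank ℝ (_root_.contractLast V) = r := by
  obtain ⟨u, hu, hul⟩ := hV.exists_mem_last_ne_zero hr hdim
  have hf : (LinearMap.proj (Fin.last n)).comp V.subtype ≠ 0 :=
    fun h ↦ hul (LinearMap.congr_fun h ⟨u, hu⟩)
  have hker := Dual.finrank_ker_add_one_of_ne_zero hf
  rw [_root_.contractLast, Submodule.finrank_map_of_disjoint_ker _
    ((hV.disjoint_ker_initₗ (by omega)).mono_left inf_le_left), ← Submodule.map_comap_subtype,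
    Submodule.finrank_map_subtype_eq, ← LinearMap.ker_comp]
  omega

end IsGeneralPosition

end LastCoordinate

section Counting

variable {n : ℕ} {V : Submodule ℝ (Fin (n + 1) → ℝ)}

lemma forall_snoc_mem_signPatterns_iff (hV : ∃ u ∈ V, u (Fin.last n) ≠ 0) {ε : Fin n → Bool} :
    (∀ b, (Fin.snoc ε b : Fin (n + 1) → Bool) ∈ signPatterns V) ↔
      ε ∈ signPatterns (contractLast V) := by
  constructor
  · intro h
    obtain ⟨p, hp, hpε⟩ := h true
    obtain ⟨m, hm, hmε⟩ := h false
    rw [mem_orthant_snoc, boolSign_true, one_mul] at hpε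
    rw [mem_orthant_snoc, boolSign_false, neg_one_mul, neg_pos] at hmε
    refine ⟨Fin.init ((-m (Fin.last n)) • p + p (Fin.last n) • m), mem_contractLast.2
      ⟨_, V.add_mem (V.smul_mem _ hp) (V.smul_mem _ hm), by simp; ring, rfl⟩, ?_⟩
    exact smul_add_smul_mem_orthant hpε.1 hmε.1 (neg_pos.2 hmε.2) hpε.2
  · rintro ⟨_, hy, hyε⟩ b
    obtain ⟨x, hx, hxl, rfl⟩ := mem_contractLast.1 hy
    obtain ⟨u, hu, hub⟩ := exists_mem_boolSign_mul_pos hV b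
    obtain ⟨t, ht, htε⟩ := exists_pos_add_smul_mem_orthant hyε (Fin.init u)
    refine ⟨x + t • u, V.add_mem hx (V.smul_mem t hu), mem_orthant_snoc.2 ⟨htε, ?_⟩⟩
    have h : boolSign b * (x (Fin.last n) + t * u (Fin.last n)) =
        t * (boolSign b * u (Fin.last n)) := by rw [hxl]; ring
    simpa [h] using mul_pos ht hub

lemma exists_snoc_mem_signPatterns_iff (hV : ∃ u ∈ V, u (Fin.last n) ≠ 0) {ε : Fin n → Bool} :
    (∃ b, (Fin.snoc ε b : Fin (n + 1) → Bool) ∈ signPatterns V) ↔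
      ε ∈ signPatterns (deleteLast V) := by
  constructor
  · rintro ⟨b, x, hx, hxε⟩
    exact ⟨Fin.init x, Submodule.mem_map_of_mem hx, (mem_orthant_snoc.1 hxε).1⟩
  · rintro ⟨_, ⟨x, hx, rfl⟩, hxε⟩
    by_cases hxl : x (Fin.last n) = 0
    · exact ⟨true, (forall_snoc_mem_signPatterns_iff hV).2
        ⟨Fin.init x, mem_contractLast.2 ⟨x, hx, hxl, rfl⟩, hxε⟩ true⟩
    · obtain ⟨b, hb⟩ := exists_boolSign_mul_pos hxl
      exact ⟨b, x, hx, mem_orthant_snoc.2 ⟨hxε, hb⟩⟩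

theorem card_signPatterns_eq_add (hV : ∃ u ∈ V, u (Fin.last n) ≠ 0) :
    Nat.card (signPatterns V) =
      Nat.card (signPatterns (deleteLast V)) + Nat.card (signPatterns (contractLast V)) := by
  classical
  rw [Nat.card_eq_sum_ite, ← (Fin.snocEquiv fun _ ↦ Bool).sum_comp, Fintype.sum_prod_type,
    sum_comm, Nat.card_eq_sum_ite, Nat.card_eq_sum_ite, ← sum_add_distrib]
  refine sum_congr rfl fun ε _ ↦ ?_
  change (∑ b, if (Fin.snoc ε b : Fin (n + 1) → Bool) ∈ signPatterns V then 1 else 0) = _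
  simp only [sum_bool_ite, exists_snoc_mem_signPatterns_iff hV, forall_snoc_mem_signPatterns_iff hV]

end Counting

theorem card_signPatterns_of_isGeneralPosition (n r : ℕ) (V : Submodule ℝ (Fin (n + 1) → ℝ))
    (hr : r ≤ n + 1) (hdim : finrank ℝ V = r) (hV : IsGeneralPosition V r) :
    Nat.card (signPatterns V) = 2 * ∑ i ∈ range r, n.choose i := by
  rcases hr.eq_or_lt with rfl | hr
  · rw [Submodule.eq_top_of_finrank_eq (hdim.trans (by simp)), signPatterns_top,
      Nat.sum_range_choose, Nat.card_univ, Nat.card_eq_fintype_card, Fintype.card_fun]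
    simp [pow_succ']
  rcases r with _ | r
  · simp [Submodule.finrank_eq_zero.1 hdim, signPatterns_bot]
  obtain ⟨m, rfl⟩ : ∃ m, n = m + 1 := ⟨n - 1, by omega⟩
  have hrm : r + 1 ≤ m + 1 := by omega
  rw [card_signPatterns_eq_add (hV.exists_mem_last_ne_zero hrm hdim),
    card_signPatterns_of_isGeneralPosition m (r + 1) _ hrm
      ((hV.finrank_deleteLast hrm).trans hdim) hV.deleteLast,
    card_signPatterns_of_isGeneralPosition m r _ (by omega)
      (hV.finrank_contractLast hrm hdim) hV.contractLast,
    sum_range_choose_succ]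
  ring

/-- Orthant-counting lemma: an `r`-dimensional subspace of `ℝ^N` in general position
meets the interiors of exactly `2 ∑_{i=0}^{r-1} C(N-1, i)` of the `2^N` open orthants. -/
theorem stmt_12 (N r : ℕ) (hr : 1 ≤ r) (hrN : r ≤ N)
    (V : Submodule ℝ (Fin N → ℝ)) (hdim : Module.finrank ℝ V = r)
    (hgen : ∀ s : Finset (Fin N), s.card = r →
      Function.Injective fun v : V => fun i : s => (v : Fin N → ℝ) i) :
    Nat.card {ε : Fin N → Bool //
        ∃ v ∈ V, ∀ i, 0 < (if ε i then (1 : ℝ) else -1) * v i} =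
      2 * ∑ i ∈ Finset.range r, Nat.choose (N - 1) i := by
  obtain ⟨n, rfl⟩ : ∃ n, N = n + 1 := ⟨N - 1, by omega⟩
  rw [Nat.add_sub_cancel]
  exact card_signPatterns_of_isGeneralPosition n r V hrN hdim (isGeneralPosition_of_injective hgen)
end

section
/- (Robustness of the recovery.) Let A be a real m×N matrix, let u0 ∈ ℝ^N be a binary vector (u0(x) ∈ {0,1} for all x), set b = A u0, and suppose u0 is the unique u ∈ ℝ^N with A u = b and 0 ≤ u(x) ≤ 1 for all x. Then there exists h > 0 such that for every ε ∈ ℝ^m with ‖ε‖₂ < h and every ũ minimizing u ↦ ‖A u − (b + ε)‖₂² over {u ∈ ℝ^N : 0 ≤ u(x) ≤ 1 for all x}, one has |ũ(x) − u0(x)| < 1/2 for every x; in particular the componentwise threshold of ũ at 1/2 equals u0. -/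
/-!
Let `K` be the part of the box `[0,1]^N` at sup-distance at least `1/2` from `u0`. It is compact,
and by uniqueness `u ↦ ‖A u - A u0‖₂` is positive on it, hence bounded below there by some `δ > 0`.
A minimizer `ũ` of the perturbed least-squares problem does at least as well as `u0`, so
`‖A ũ - (b + ε)‖₂ ≤ ‖ε‖₂` and, by the triangle inequality, `‖A ũ - A u0‖₂ ≤ 2 ‖ε‖₂`.
Taking `h = δ / 2` forces `ũ ∉ K`.
-/

open Matrix Metric

theorem exists_pos_forall_mem_of_isMinOn_dist {X E : Type*} [TopologicalSpace X] [MetricSpace E]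
    {F : X → E} (hF : Continuous F) {C U : Set X} (hC : IsCompact C) (hU : IsOpen U)
    {u0 : X} (hu0C : u0 ∈ C) (hu0U : u0 ∈ U) (huniq : ∀ u ∈ C, F u = F u0 → u = u0) :
    ∃ h > 0, ∀ y, dist y (F u0) < h →
      ∀ ut ∈ C, IsMinOn (fun u => dist (F u) y) C ut → ut ∈ U := by
  have hpos : ∀ u ∈ C \ U, 0 < dist (F u) (F u0) := fun u hu =>
    dist_pos.2 fun heq => hu.2 (huniq u hu.1 heq ▸ hu0U)
  obtain ⟨δ, hδ, hδK⟩ := (hC.diff hU).exists_forall_le'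
    (hF.dist continuous_const).continuousOn hpos
  refine ⟨δ / 2, by positivity, fun y hy ut hutC hmin => ?_⟩
  by_contra hutU
  have hbeats : dist (F ut) y ≤ dist (F u0) y := hmin hu0C
  have hclose : dist (F ut) (F u0) < δ :=
    calc dist (F ut) (F u0) ≤ dist (F ut) y + dist y (F u0) := dist_triangle _ _ _
      _ ≤ 2 * dist y (F u0) := by linarith [dist_comm y (F u0)]
      _ < δ := by linarith
  exact (hδK ut ⟨hutC, hutU⟩).not_gt hclose

theorem EuclideanSpace.dist_toLp_eq_sqrt_sum_sq {ι : Type*} [Fintype ι] (v w : ι → ℝ) :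
    dist (WithLp.toLp 2 v : EuclideanSpace ℝ ι) (WithLp.toLp 2 w) = √(∑ i, (v i - w i) ^ 2) := by
  simp [EuclideanSpace.dist_eq, Real.dist_eq, sq_abs]

theorem ite_half_le_eq_of_abs_sub_lt {t b : ℝ} (hb : b = 0 ∨ b = 1) (h : |t - b| < 1 / 2) :
    (if 1 / 2 ≤ t then (1 : ℝ) else 0) = b := by
  rw [abs_lt] at h
  rcases hb with rfl | rfl
  · rw [if_neg (by linarith)]
  · rw [if_pos (by linarith)]

/-- Theorem (robustness of the recovery): if the binary vector `u0` is the unique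
solution of (P1), then for all small enough perturbations `ε` of the data, every
minimizer of `‖Au - (b + ε)‖₂²` over the box `[0,1]^N` lies within `1/2` of `u0`
componentwise; in particular its threshold at `1/2` equals `u0`. -/
theorem stmt_16 (m N : ℕ) (A : Matrix (Fin m) (Fin N) ℝ) (u0 : Fin N → ℝ)
    (hbin : ∀ x, u0 x = 0 ∨ u0 x = 1)
    (huniq : ∀ u : Fin N → ℝ, A.mulVec u = A.mulVec u0 →
      (∀ x, 0 ≤ u x ∧ u x ≤ 1) → u = u0) :
    ∃ h : ℝ, 0 < h ∧
      ∀ ε : Fin m → ℝ, Real.sqrt (∑ i, ε i ^ 2) < h →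
      ∀ ut : Fin N → ℝ, (∀ x, 0 ≤ ut x ∧ ut x ≤ 1) →
      (∀ u : Fin N → ℝ, (∀ x, 0 ≤ u x ∧ u x ≤ 1) →
        (∑ i, (A.mulVec ut i - (A.mulVec u0 i + ε i)) ^ 2) ≤
        (∑ i, (A.mulVec u i - (A.mulVec u0 i + ε i)) ^ 2)) →
      (∀ x, |ut x - u0 x| < 1 / 2) ∧
      (∀ x, (if 1 / 2 ≤ ut x then (1 : ℝ) else 0) = u0 x) := by
  have mem_box {u : Fin N → ℝ} (hu : ∀ x, 0 ≤ u x ∧ u x ≤ 1) : u ∈ Set.Icc 0 1 :=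
    ⟨fun x => (hu x).1, fun x => (hu x).2⟩
  have hu0box : ∀ x, 0 ≤ u0 x ∧ u0 x ≤ 1 := fun x => by rcases hbin x with h | h <;> simp [h]
  obtain ⟨h, hh, hrobust⟩ := exists_pos_forall_mem_of_isMinOn_dist
    (F := fun u => (WithLp.toLp 2 (A *ᵥ u) : EuclideanSpace ℝ (Fin m))) (by fun_prop)
    isCompact_Icc isOpen_ball (mem_box hu0box) (mem_ball_self one_half_pos)
    fun u hu heq => huniq u (WithLp.toLp_injective 2 heq) fun x => ⟨hu.1 x, hu.2 x⟩
  refine ⟨h, hh, fun ε hε ut hut hmin => ?_⟩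
  have hnear : ut ∈ ball u0 (1 / 2) := by
    refine hrobust (WithLp.toLp 2 (A *ᵥ u0 + ε)) ?_ ut (mem_box hut) fun u hu => ?_
    · simpa only [EuclideanSpace.dist_toLp_eq_sqrt_sum_sq, Pi.add_apply, add_sub_cancel_left]
        using hε
    · simp only [EuclideanSpace.dist_toLp_eq_sqrt_sum_sq, Pi.add_apply]
      exact Real.sqrt_le_sqrt (hmin u fun x => ⟨hu.1 x, hu.2 x⟩)
  have hcoord : ∀ x, |ut x - u0 x| < 1 / 2 := by
    simpa [dist_pi_lt_iff, Real.dist_eq] using hnear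
  exact ⟨hcoord, fun x => ite_half_le_eq_of_abs_sub_lt (hbin x) (hcoord x)⟩
end

section
/- Let A be a real m×N matrix, let σ ∈ {−1,+1}^N be a sign vector, and let O = {w ∈ ℝ^N : σ(i)·w(i) ≥ 0 for all i} be the corresponding closed orthant. Suppose O ∩ ker A = {0}, i.e. the only w ∈ O with A w = 0 is w = 0. Then there exists h > 0 such that for every ε ∈ ℝ^m with ‖ε‖₂ < h and every w* ∈ O minimizing w ↦ ‖A w − ε‖₂ over O, one has |w*(i)| < 1/2 for every i. -/
/-!
The map `w ↦ ‖A w‖` is continuous and positive on the compact set of unit vectors of the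
orthant, so by homogeneity `c ‖w‖ ≤ ‖A w‖` on the whole orthant for some `c > 0`. Comparing a
minimizer `w*` with the competitor `0` gives `‖A w* - ε‖ ≤ ‖ε‖`, hence `c ‖w*‖ ≤ ‖A w*‖ ≤ 2 ‖ε‖`,
which is small when `ε` is.
-/

open Set

section ConeInjectivity

variable {E F : Type*} [NormedAddCommGroup E] [NormedSpace ℝ E]
  [NormedAddCommGroup F] [NormedSpace ℝ F]

theorem exists_pos_mul_norm_le_norm_apply_of_cone [FiniteDimensional ℝ E] (L : E →ₗ[ℝ] F)
    {C : Set E} (hC : IsClosed C) (hsmul : ∀ w ∈ C, ∀ t : ℝ, 0 ≤ t → t • w ∈ C)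
    (hker : ∀ w ∈ C, L w = 0 → w = 0) :
    ∃ c : ℝ, 0 < c ∧ ∀ w ∈ C, c * ‖w‖ ≤ ‖L w‖ := by
  have hK : IsCompact (C ∩ Metric.sphere 0 1) := (isCompact_sphere 0 1).inter_left hC
  have hpos : ∀ w ∈ C ∩ Metric.sphere 0 1, 0 < ‖L w‖ := by
    rintro w ⟨hwC, hw⟩
    refine norm_pos_iff.2 fun hLw => ?_
    simp [hker w hwC hLw] at hw
  obtain ⟨c, hc, hcK⟩ :=
    hK.exists_forall_le' L.continuous_of_finiteDimensional.norm.continuousOn hpos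
  refine ⟨c, hc, fun w hwC => ?_⟩
  rcases eq_or_ne w 0 with rfl | hw
  · simp
  have hunit : ‖w‖⁻¹ • w ∈ C ∩ Metric.sphere 0 1 :=
    ⟨hsmul w hwC _ (by positivity), by simp [norm_smul, norm_ne_zero_iff.2 hw]⟩
  have := hcK _ hunit
  rwa [map_smul, norm_smul, norm_inv, norm_norm, le_inv_mul_iff₀' (norm_pos_iff.2 hw)] at this

theorem norm_apply_le_two_mul_of_isMinOn (L : E →ₗ[ℝ] F) {C : Set E} (h0 : (0 : E) ∈ C)
    {ε : F} {w : E} (hw : IsMinOn (fun v => ‖L v - ε‖) C w) : ‖L w‖ ≤ 2 * ‖ε‖ := by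
  have hcomp : ‖L w - ε‖ ≤ ‖ε‖ := by simpa using hw h0
  linarith [norm_le_norm_add_norm_sub' (L w) ε]

theorem exists_pos_forall_norm_lt_of_isMinOn [FiniteDimensional ℝ E] (L : E →ₗ[ℝ] F)
    {C : Set E} (hC : IsClosed C) (hsmul : ∀ w ∈ C, ∀ t : ℝ, 0 ≤ t → t • w ∈ C)
    (hker : ∀ w ∈ C, L w = 0 → w = 0) {r : ℝ} (hr : 0 < r) :
    ∃ h : ℝ, 0 < h ∧ ∀ ε : F, ‖ε‖ < h →
      ∀ w ∈ C, IsMinOn (fun v => ‖L v - ε‖) C w → ‖w‖ < r := by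
  obtain ⟨c, hc, hcC⟩ := exists_pos_mul_norm_le_norm_apply_of_cone L hC hsmul hker
  refine ⟨c * r / 2, by positivity, fun ε hε w hwC hmin => ?_⟩
  have h0 : (0 : E) ∈ C := by simpa using hsmul w hwC 0 le_rfl
  have hLw := norm_apply_le_two_mul_of_isMinOn L h0 hmin
  have : c * ‖w‖ < c * r := by linarith [hcC w hwC]
  exact lt_of_mul_lt_mul_left this hc.le

end ConeInjectivity

def signedOrthant {ι : Type*} (σ : ι → ℝ) : Set (ι → ℝ) := {w | ∀ i, 0 ≤ σ i * w i}

theorem isClosed_signedOrthant {ι : Type*} (σ : ι → ℝ) : IsClosed (signedOrthant σ) := by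
  simp only [signedOrthant, ofPred_forall]
  exact isClosed_iInter fun i =>
    isClosed_le continuous_const (continuous_const.mul (continuous_apply i))

theorem smul_mem_signedOrthant {ι : Type*} {σ w : ι → ℝ} (hw : w ∈ signedOrthant σ) {t : ℝ}
    (ht : 0 ≤ t) : t • w ∈ signedOrthant σ := fun i => by
  simpa [mul_left_comm] using mul_nonneg ht (hw i)

theorem EuclideanSpace.norm_toLp {ι : Type*} [Fintype ι] (x : ι → ℝ) :
    ‖WithLp.toLp 2 x‖ = Real.sqrt (∑ i, x i ^ 2) := by
  simp [EuclideanSpace.norm_eq, Real.norm_eq_abs, sq_abs]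

theorem stmt_17_general (m N : ℕ) (A : Matrix (Fin m) (Fin N) ℝ) (σ : Fin N → ℝ)
    (hker : ∀ w : Fin N → ℝ, (∀ i, 0 ≤ σ i * w i) → A.mulVec w = 0 → w = 0) :
    ∃ h : ℝ, 0 < h ∧
      ∀ ε : Fin m → ℝ, Real.sqrt (∑ i, ε i ^ 2) < h →
      ∀ w : Fin N → ℝ, (∀ i, 0 ≤ σ i * w i) →
      (∀ w' : Fin N → ℝ, (∀ i, 0 ≤ σ i * w' i) →
        Real.sqrt (∑ i, (A.mulVec w i - ε i) ^ 2) ≤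
        Real.sqrt (∑ i, (A.mulVec w' i - ε i) ^ 2)) →
      ∀ i, |w i| < 1 / 2 := by
  -- `Fin N → ℝ` carries the sup norm, which bounds each `|w i|`; the residual lives in `ℓ²`.
  let L : (Fin N → ℝ) →ₗ[ℝ] EuclideanSpace ℝ (Fin m) :=
    (WithLp.linearEquiv 2 ℝ (Fin m → ℝ)).symm.toLinearMap ∘ₗ A.mulVecLin
  have hres : ∀ (v : Fin N → ℝ) (ε : Fin m → ℝ),
      ‖L v - WithLp.toLp 2 ε‖ = Real.sqrt (∑ i, (A.mulVec v i - ε i) ^ 2) := fun v ε =>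
    EuclideanSpace.norm_toLp (A.mulVec v - ε)
  have hLker : ∀ w ∈ signedOrthant σ, L w = 0 → w = 0 := fun w hw hLw =>
    hker w hw (by simpa [L] using hLw)
  obtain ⟨h, hh, hsmall⟩ := exists_pos_forall_norm_lt_of_isMinOn L (isClosed_signedOrthant σ)
    (fun _ hw _ ht => smul_mem_signedOrthant hw ht) hLker (r := 1 / 2) (by norm_num)
  refine ⟨h, hh, fun ε hε w hw hmin i => (norm_le_pi_norm w i).trans_lt ?_⟩
  refine hsmall (WithLp.toLp 2 ε) (by rwa [EuclideanSpace.norm_toLp]) w hw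
    (isMinOn_iff.2 fun w' hw' => ?_)
  simpa only [hres] using hmin w' hw'

/-- Lemma in the proof of the robustness theorem: if the closed orthant `O` determined
by the sign vector `σ` meets `ker A` only at `0`, then for all small enough `ε`, every
minimizer `w*` of `‖Aw - ε‖₂` over `O` satisfies `|w*(i)| < 1/2` for every `i`. -/
theorem stmt_17 (m N : ℕ) (A : Matrix (Fin m) (Fin N) ℝ) (σ : Fin N → ℝ)
    (hσ : ∀ i, σ i = 1 ∨ σ i = -1)
    (hker : ∀ w : Fin N → ℝ, (∀ i, 0 ≤ σ i * w i) → A.mulVec w = 0 → w = 0) :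
    ∃ h : ℝ, 0 < h ∧
      ∀ ε : Fin m → ℝ, Real.sqrt (∑ i, ε i ^ 2) < h →
      ∀ w : Fin N → ℝ, (∀ i, 0 ≤ σ i * w i) →
      (∀ w' : Fin N → ℝ, (∀ i, 0 ≤ σ i * w' i) →
        Real.sqrt (∑ i, (A.mulVec w i - ε i) ^ 2) ≤
        Real.sqrt (∑ i, (A.mulVec w' i - ε i) ^ 2)) →
      ∀ i, |w i| < 1 / 2 :=
  stmt_17_general m N A σ hker
end

section
/- Let A be a real m×N matrix, σ ∈ {−1,+1}^N a sign vector, and O = {w ∈ ℝ^N : σ(i)·w(i) ≥ 0 for all i} the corresponding closed orthant. If w* ∈ O minimizes w ↦ ‖A w − ε‖₂ over O for some ε ∈ ℝ^m, then ⟨A w*, A w* − ε⟩ = 0, and consequently ‖A w*‖₂² + ‖A w* − ε‖₂² = ‖ε‖₂², so in particular ‖A w*‖₂ ≤ ‖ε‖₂. -/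
/-!
The orthant is a cone, so the whole ray `{t • w* : t ≥ 0}` is feasible and `t ↦ ‖t • Aw* - ε‖²`,
a quadratic in `t`, is minimized over `t ≥ 0` at `t = 1`. This forces `‖Aw*‖² = ⟪Aw*, ε⟫`, i.e.
`Aw* ⟂ Aw* - ε`, and the identity is Pythagoras for `ε = Aw* + (ε - Aw*)`.
-/

open RealInnerProductSpace

theorem eq_of_forall_nonneg_sub_two_mul_le {a b : ℝ} (ha : 0 ≤ a)
    (h : ∀ t : ℝ, 0 ≤ t → a - 2 * b ≤ t ^ 2 * a - 2 * t * b) : a = b := by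
  have hb : a ≤ 2 * b := by simpa using h 0 le_rfl
  rcases ha.eq_or_lt with rfl | ha
  · nlinarith [h 2 zero_le_two]
  · -- evaluate at the unconstrained minimizer `t = b / a` of the quadratic
    have hmin := h (b / a) (div_nonneg (by linarith) ha.le)
    have hsq : (a - b) ^ 2 = a * (a - 2 * b - ((b / a) ^ 2 * a - 2 * (b / a) * b)) := by
      field_simp; ring
    have : (a - b) ^ 2 ≤ 0 := hsq ▸ mul_nonpos_of_nonneg_of_nonpos ha.le (by linarith)
    nlinarith [sq_nonneg (a - b)]

section InnerProductSpace

variable {E : Type*} [NormedAddCommGroup E] [InnerProductSpace ℝ E]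

theorem inner_sub_eq_zero_of_forall_norm_sub_le_norm_smul_sub {u e : E}
    (h : ∀ t : ℝ, 0 ≤ t → ‖u - e‖ ≤ ‖t • u - e‖) : ⟪u, u - e⟫ = 0 := by
  have hquad : ∀ t : ℝ, 0 ≤ t →
      ‖u‖ ^ 2 - 2 * ⟪u, e⟫ ≤ t ^ 2 * ‖u‖ ^ 2 - 2 * t * ⟪u, e⟫ := fun t ht => by
    have := pow_le_pow_left₀ (norm_nonneg _) (h t ht) 2
    rw [norm_sub_sq_real, norm_sub_sq_real, norm_smul, inner_smul_left, mul_pow,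
      Real.norm_eq_abs, sq_abs] at this
    simp only [conj_trivial] at this
    linarith
  rw [inner_sub_right, real_inner_self_eq_norm_sq,
    eq_of_forall_nonneg_sub_two_mul_le (sq_nonneg _) hquad, sub_self]

theorem norm_sq_add_norm_sub_sq_eq_of_inner_sub_eq_zero {u e : E} (h : ⟪u, u - e⟫ = 0) :
    ‖u‖ ^ 2 + ‖u - e‖ ^ 2 = ‖e‖ ^ 2 := by
  have h' : ⟪u, e - u⟫ = 0 := by rw [← neg_sub, inner_neg_right, h, neg_zero]
  have := norm_add_sq_eq_norm_sq_add_norm_sq_real h'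
  rw [add_sub_cancel, norm_sub_rev e u] at this
  simpa only [sq] using this.symm

end InnerProductSpace

namespace EuclideanSpace

variable {ι : Type*} [Fintype ι]

theorem norm_toLp_s18 (x : ι → ℝ) : ‖WithLp.toLp 2 x‖ = √(∑ i, x i ^ 2) := by
  simp [EuclideanSpace.norm_eq]

theorem norm_toLp_sq (x : ι → ℝ) : ‖WithLp.toLp 2 x‖ ^ 2 = ∑ i, x i ^ 2 := by
  simp [EuclideanSpace.real_norm_sq_eq]

theorem inner_toLp (x y : ι → ℝ) : ⟪WithLp.toLp 2 x, WithLp.toLp 2 y⟫ = ∑ i, x i * y i := by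
  simp [EuclideanSpace.inner_toLp_toLp, dotProduct, mul_comm]

end EuclideanSpace

theorem stmt_18_general (m N : ℕ) (A : Matrix (Fin m) (Fin N) ℝ) (σ : Fin N → ℝ)
    (ε : Fin m → ℝ) (w : Fin N → ℝ) (hw : ∀ i, 0 ≤ σ i * w i)
    (hmin : ∀ w' : Fin N → ℝ, (∀ i, 0 ≤ σ i * w' i) →
      Real.sqrt (∑ i, (A.mulVec w i - ε i) ^ 2) ≤
      Real.sqrt (∑ i, (A.mulVec w' i - ε i) ^ 2)) :
    (∑ i, A.mulVec w i * (A.mulVec w i - ε i)) = 0 ∧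
    (∑ i, (A.mulVec w i) ^ 2) + (∑ i, (A.mulVec w i - ε i) ^ 2) = (∑ i, ε i ^ 2) ∧
    Real.sqrt (∑ i, (A.mulVec w i) ^ 2) ≤ Real.sqrt (∑ i, ε i ^ 2) := by
  set u := WithLp.toLp 2 (A.mulVec w)
  set e := WithLp.toLp 2 ε
  have hray : ∀ t : ℝ, 0 ≤ t → ‖u - e‖ ≤ ‖t • u - e‖ := fun t ht => by
    have := hmin (t • w) fun i => by
      simpa [mul_left_comm] using mul_nonneg ht (hw i)
    simpa [u, e, ← WithLp.toLp_sub, ← WithLp.toLp_smul, Matrix.mulVec_smul,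
      EuclideanSpace.norm_toLp_s18] using this
  have horth := inner_sub_eq_zero_of_forall_norm_sub_le_norm_smul_sub hray
  have hpyth := norm_sq_add_norm_sub_sq_eq_of_inner_sub_eq_zero horth
  refine ⟨?_, ?_, ?_⟩
  · simpa [u, e, ← WithLp.toLp_sub, EuclideanSpace.inner_toLp] using horth
  · simpa [u, e, ← WithLp.toLp_sub, EuclideanSpace.norm_toLp_sq] using hpyth
  · rw [← EuclideanSpace.norm_toLp_s18, ← EuclideanSpace.norm_toLp_s18]
    nlinarith [norm_nonneg u, norm_nonneg e, sq_nonneg ‖u - e‖]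

/-- Orthogonality property of least-squares minimizers over a closed orthant: if `w*`
minimizes `‖Aw - ε‖₂` over the orthant `O`, then `⟨Aw*, Aw* - ε⟩ = 0`, hence
`‖Aw*‖₂² + ‖Aw* - ε‖₂² = ‖ε‖₂²` and in particular `‖Aw*‖₂ ≤ ‖ε‖₂`. -/
theorem stmt_18 (m N : ℕ) (A : Matrix (Fin m) (Fin N) ℝ) (σ : Fin N → ℝ)
    (hσ : ∀ i, σ i = 1 ∨ σ i = -1)
    (ε : Fin m → ℝ) (w : Fin N → ℝ) (hw : ∀ i, 0 ≤ σ i * w i)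
    (hmin : ∀ w' : Fin N → ℝ, (∀ i, 0 ≤ σ i * w' i) →
      Real.sqrt (∑ i, (A.mulVec w i - ε i) ^ 2) ≤
      Real.sqrt (∑ i, (A.mulVec w' i - ε i) ^ 2)) :
    (∑ i, A.mulVec w i * (A.mulVec w i - ε i)) = 0 ∧
    (∑ i, (A.mulVec w i) ^ 2) + (∑ i, (A.mulVec w i - ε i) ^ 2) = (∑ i, ε i ^ 2) ∧
    Real.sqrt (∑ i, (A.mulVec w i) ^ 2) ≤ Real.sqrt (∑ i, ε i ^ 2) :=
  stmt_18_general m N A σ ε w hw hmin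
end
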